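/- arXiv:1710.10428 — 15 statements merged into one kernel-verified Lean document; each statement's English description precedes it below -/
import Mathlib

section
/- Let f : ℝ → ℝ be continuous with f(x) ≥ 0 for all x, let F(x) = ∫₀ˣ du/(1+f(u)), let h : J → ℝ be the inverse of F on J = F(ℝ), and define g : J → ℝ by g(y) = f(h(y))/(1+f(h(y))). Let I : ℝ → ℝ be a function and let y : ℝ → J be differentiable. Then y satisfies y'(t) = (1 − I(t))·g(y(t)) + I(t) for all t if and only if the function x(t) = h(y(t)) is differentiable and satisfies x'(t) = f(x(t)) + I(t) for all t. -/
/-- Let `f : ℝ → ℝ` be continuous with `f x ≥ 0` for all `x`, let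
`F x = ∫ u in 0..x, 1 / (1 + f u)`, let `h` be the inverse of `F` on
`J = Set.range F` (modeled as a total function with `h (F x) = x`), and define
`g y = f (h y) / (1 + f (h y))`.  Let `I : ℝ → ℝ` and let `y : ℝ → ℝ` be
differentiable with values in `J`.  Then `y` satisfies
`y' t = (1 - I t) * g (y t) + I t` for all `t` iff the function
`x t = h (y t)` is differentiable and satisfies `x' t = f (x t) + I t`
for all `t`. -/
theorem phase_dynamics_dual_to_integrate_and_fire
    (f : ℝ → ℝ) (hcont : Continuous f) (hge : ∀ x, 0 ≤ f x)
    (F : ℝ → ℝ) (hF : ∀ x, F x = ∫ u in (0:ℝ)..x, 1 / (1 + f u))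
    (h : ℝ → ℝ) (hinv : ∀ x, h (F x) = x)
    (g : ℝ → ℝ) (hg : ∀ y, g y = f (h y) / (1 + f (h y)))
    (I : ℝ → ℝ) (y : ℝ → ℝ) (hy : Differentiable ℝ y)
    (hyJ : ∀ t, y t ∈ Set.range F) :
    (∀ t, deriv y t = (1 - I t) * g (y t) + I t) ↔
      (Differentiable ℝ (fun t => h (y t)) ∧
        ∀ t, deriv (fun s => h (y s)) t = f (h (y t)) + I t) := by
  set φ : ℝ → ℝ := fun u => 1 / (1 + f u) with hφdef
  have hpos : ∀ u, 0 < 1 + f u := fun u => by linarith [hge u]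
  have hφcont : Continuous φ :=
    continuous_const.div (continuous_const.add hcont) (fun u => (hpos u).ne')
  have hφpos : ∀ u, 0 < φ u := fun u => div_pos one_pos (hpos u)
  have hFeq : F = fun x => ∫ u in (0:ℝ)..x, φ u := funext hF
  have hFder : ∀ a, HasDerivAt F (φ a) a := by
    intro a
    rw [hFeq]
    exact intervalIntegral.integral_hasDerivAt_right
      (hφcont.intervalIntegrable _ _)
      (hφcont.stronglyMeasurableAtFilter _ _)
      hφcont.continuousAt
  have hFmono : StrictMono F := by
    apply strictMono_of_deriv_pos
    intro a
    rw [(hFder a).deriv]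
    exact hφpos a
  have hFcont : Continuous F :=
    continuous_iff_continuousAt.2 fun a => (hFder a).continuousAt
  -- For each `a` and `ε > 0`, the interval `Ioo (F (a-ε)) (F (a+ε))` is an open
  -- neighborhood of `F a` contained in the range of `F`, on which `h` takes
  -- values in `Ioo (a-ε) (a+ε)`.
  have hsub : ∀ (a ε : ℝ), 0 < ε →
      Set.Ioo (F (a - ε)) (F (a + ε)) ⊆ F '' Set.Ioo (a - ε) (a + ε) := by
    intro a ε hε
    exact intermediate_value_Ioo (by linarith) (hFcont.continuousOn)
  have hmem : ∀ (a ε : ℝ), 0 < ε → Set.Ioo (F (a - ε)) (F (a + ε)) ∈ nhds (F a) := by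
    intro a ε hε
    exact Ioo_mem_nhds (hFmono (by linarith)) (hFmono (by linarith))
  -- `h` is continuous at every point of the range of `F`.
  have hcontA : ∀ a : ℝ, ContinuousAt h (F a) := by
    intro a
    have hha : h (F a) = a := hinv a
    rw [ContinuousAt, hha]
    rw [Metric.nhds_basis_ball.tendsto_right_iff]
    intro ε hε
    filter_upwards [hmem a ε hε] with w hw
    obtain ⟨b, hb, rfl⟩ := hsub a ε hε hw
    rw [hinv b]
    rw [Metric.mem_ball, Real.dist_eq, abs_lt]
    constructor <;> [linarith [hb.1]; linarith [hb.2]]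
  -- eventually `F ∘ h = id` near a point of the range
  have hev : ∀ a : ℝ, ∀ᶠ w in nhds (F a), F (h w) = w := by
    intro a
    filter_upwards [hmem a 1 one_pos] with w hw
    obtain ⟨b, _, rfl⟩ := hsub a 1 one_pos hw
    rw [hinv b]
  -- derivative of `h` at points of the range
  have hder : ∀ a : ℝ, HasDerivAt h (1 + f a) (F a) := by
    intro a
    have := HasDerivAt.of_local_left_inverse (hcontA a)
      (by rw [hinv a]; exact hFder a) (hφpos a).ne' (hev a)
    have hinveq : (φ a)⁻¹ = 1 + f a := by
      rw [hφdef]; simp [one_div, inv_inv]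
    rwa [hinveq] at this
  -- chain rule for `h ∘ y`
  have key : ∀ t, HasDerivAt (fun s => h (y s))
      ((1 + f (h (y t))) * deriv y t) t := by
    intro t
    obtain ⟨a, ha⟩ := hyJ t
    have h1 : HasDerivAt h (1 + f (h (y t))) (y t) := by
      rw [← ha, hinv a]; exact hder a
    exact h1.comp t (hy t).hasDerivAt
  constructor
  · intro hyd
    refine ⟨fun t => (key t).differentiableAt, fun t => ?_⟩
    rw [(key t).deriv, hyd t, hg]
    have hne := (hpos (h (y t))).ne'
    field_simp
    ring
  · rintro ⟨-, hx⟩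
    intro t
    have h1 : (1 + f (h (y t))) * deriv y t = f (h (y t)) + I t := by
      rw [← (key t).deriv]; exact hx t
    have hne := (hpos (h (y t))).ne'
    have h2 : deriv y t = (f (h (y t)) + I t) / (1 + f (h (y t))) := by
      rw [eq_div_iff hne]; linarith [h1]
    rw [h2, hg]
    field_simp
    ring
end

section
/- Let I : ℝ → ℝ be a function and let y : ℝ → ℝ be differentiable with y(t) ∈ (−π/2, π/2) for all t. Then y satisfies the θ-model equation y'(t) = (1 − I(t))·sin(y(t))² + I(t) for all t if and only if the function x(t) = tan(y(t)) is differentiable and satisfies the quadratic integrate-and-fire equation x'(t) = x(t)² + I(t) for all t. -/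
open Real

/-- Let `I : ℝ → ℝ` and let `y : ℝ → ℝ` be differentiable with
`y t ∈ (-π/2, π/2)` for all `t`.  Then `y` satisfies the θ-model equation
`y' t = (1 - I t) * sin (y t) ^ 2 + I t` for all `t` iff the function
`x t = tan (y t)` is differentiable and satisfies the quadratic
integrate-and-fire equation `x' t = x t ^ 2 + I t` for all `t`. -/
theorem theta_model_dual_to_QIF
    (I : ℝ → ℝ) (y : ℝ → ℝ) (hy : Differentiable ℝ y)
    (hyJ : ∀ t, y t ∈ Set.Ioo (-(π / 2)) (π / 2)) :
    (∀ t, deriv y t = (1 - I t) * Real.sin (y t) ^ 2 + I t) ↔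
      (Differentiable ℝ (fun t => Real.tan (y t)) ∧
        ∀ t, deriv (fun s => Real.tan (y s)) t = Real.tan (y t) ^ 2 + I t) := by
  have hcos : ∀ t, Real.cos (y t) ≠ 0 := fun t =>
    (Real.cos_pos_of_mem_Ioo (hyJ t)).ne'
  have hx : ∀ t, HasDerivAt (fun s => Real.tan (y s))
      ((1 / Real.cos (y t) ^ 2) * deriv y t) t := fun t =>
    (Real.hasDerivAt_tan (hcos t)).comp t (hy t).hasDerivAt
  constructor
  · intro h
    refine ⟨fun t => (hx t).differentiableAt, fun t => ?_⟩
    rw [(hx t).deriv, h t, Real.tan_eq_sin_div_cos]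
    have hc := hcos t
    have hpy := Real.sin_sq_add_cos_sq (y t)
    field_simp
    linear_combination (-(I t)) * hpy
  · intro ⟨_, h⟩
    intro t
    have hd := (hx t).deriv
    rw [h t, Real.tan_eq_sin_div_cos] at hd
    have hc := hcos t
    have hpy := Real.sin_sq_add_cos_sq (y t)
    have hc2 : Real.cos (y t) ^ 2 ≠ 0 := pow_ne_zero _ hc
    field_simp at hd
    linear_combination -hd + I t * hpy
end

section
/- Let I : ℝ → ℝ be a function and let y : ℝ → ℝ be differentiable with y(t) ∈ (−1, 1) for all t. Then y satisfies the quadratic phase equation y'(t) = (1 − I(t))·y(t)² + I(t) for all t if and only if the function x(t) = artanh(y(t)) is differentiable and satisfies x'(t) = sinh(x(t))² + I(t) for all t. -/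
/-- The real inverse hyperbolic tangent (not present in this version of
Mathlib), `artanh x = (1/2) * log ((1 + x) / (1 - x))`. -/
noncomputable def Real.artanh' (x : ℝ) : ℝ := (1 / 2) * Real.log ((1 + x) / (1 - x))

/-! With `x = artanh y` one has `x' = y' / (1 - y²)` and `sinh² x = y² / (1 - y²)`, so dividing
`y' = (1 - I) y² + I = y² + I (1 - y²)` by `1 - y²` gives `x' = sinh² x + I`, and conversely. -/

open Set

theorem one_sub_sq_pos_of_mem_Ioo {x : ℝ} (hx : x ∈ Ioo (-1) 1) : 0 < 1 - x ^ 2 :=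
  sub_pos.2 ((sq_lt_one_iff_abs_lt_one x).2 (abs_lt.2 hx))

namespace Real

theorem artanh'_eq_artanh {x : ℝ} (hx : x ∈ Icc (-1) 1) : artanh' x = artanh x :=
  (artanh_eq_half_log hx).symm

theorem hasDerivAt_artanh' {x : ℝ} (hx : x ∈ Ioo (-1) 1) :
    HasDerivAt artanh' (1 - x ^ 2)⁻¹ x := by
  have h₁ : 0 < 1 + x := by linarith [hx.1]
  have h₂ : 0 < 1 - x := by linarith [hx.2]
  have hq : HasDerivAt (fun x : ℝ => (1 + x) / (1 - x)) (2 / (1 - x) ^ 2) x :=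
    (((hasDerivAt_id' x).const_add 1).fun_div ((hasDerivAt_id' x).const_sub 1)
      h₂.ne').congr_deriv (by ring)
  refine ((hq.log (div_pos h₁ h₂).ne').const_mul (1 / 2)).congr_deriv ?_
  rw [show 1 - x ^ 2 = (1 + x) * (1 - x) by ring]
  field_simp

theorem sinh_artanh'_sq {x : ℝ} (hx : x ∈ Ioo (-1) 1) :
    sinh (artanh' x) ^ 2 = x ^ 2 / (1 - x ^ 2) := by
  rw [artanh'_eq_artanh (Ioo_subset_Icc_self hx), sinh_artanh hx, div_pow,
    sq_sqrt (one_sub_sq_pos_of_mem_Ioo hx).le]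

end Real

theorem eq_quadratic_phase_iff {y d i : ℝ} (hy : 1 - y ^ 2 ≠ 0) :
    d = (1 - i) * y ^ 2 + i ↔ (1 - y ^ 2)⁻¹ * d = y ^ 2 / (1 - y ^ 2) + i := by
  have h : y ^ 2 / (1 - y ^ 2) + i = (1 - y ^ 2)⁻¹ * ((1 - i) * y ^ 2 + i) := by
    field_simp
    ring
  rw [h, mul_right_inj' (inv_ne_zero hy)]

/-- Let `I : ℝ → ℝ` and let `y : ℝ → ℝ` be differentiable with
`y t ∈ (-1, 1)` for all `t`.  Then `y` satisfies the quadratic phase equation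
`y' t = (1 - I t) * y t ^ 2 + I t` for all `t` iff the function
`x t = artanh (y t)` is differentiable and satisfies
`x' t = sinh (x t) ^ 2 + I t` for all `t`. -/
theorem quadratic_phase_dual_to_sinh_squared_IF
    (I : ℝ → ℝ) (y : ℝ → ℝ) (hy : Differentiable ℝ y)
    (hyJ : ∀ t, y t ∈ Set.Ioo (-1 : ℝ) 1) :
    (∀ t, deriv y t = (1 - I t) * y t ^ 2 + I t) ↔
      (Differentiable ℝ (fun t => Real.artanh' (y t)) ∧
        ∀ t, deriv (fun s => Real.artanh' (y s)) t
          = Real.sinh (Real.artanh' (y t)) ^ 2 + I t) := by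
  have hx : ∀ t, HasDerivAt (fun s => Real.artanh' (y s)) ((1 - y t ^ 2)⁻¹ * deriv y t) t :=
    fun t => (Real.hasDerivAt_artanh' (hyJ t)).comp t (hy t).hasDerivAt
  refine Iff.trans (forall_congr' fun t => ?_)
    (and_iff_right (show Differentiable ℝ _ from fun t => (hx t).differentiableAt)).symm
  rw [(hx t).deriv, Real.sinh_artanh'_sq (hyJ t)]
  exact eq_quadratic_phase_iff (one_sub_sq_pos_of_mem_Ioo (hyJ t)).ne'
end

section
/- Let σ : ℝ → ℝ denote the sign function, let I : ℝ → ℝ be a function, and let y : ℝ → ℝ be differentiable. Then y satisfies y'(t) = (1 − I(t))·(1 − e^{−|y(t)|}) + I(t) for all t if and only if the function x(t) = σ(y(t))·(e^{|y(t)|} − 1) is differentiable and satisfies the symmetrized leaky integrate-and-fire equation x'(t) = |x(t)| + I(t) for all t. -/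
/-!
The map `expPhase v = σ(v) (e^{|v|} - 1)` equals `e^v - 1` on `[0, ∞)` and `1 - e^{-v}` on
`(-∞, 0]`; both one-sided derivatives at `0` equal `1`, so it is differentiable everywhere with
derivative `e^{|v|}`. By the chain rule `x' = e^{|y|} y'`, and since `|x| = e^{|y|} - 1`, the
equation `x' = |x| + I` is `e^{|y|}` times the phase equation for `y`.
-/

open Real Set

noncomputable def expPhase (v : ℝ) : ℝ := Real.sign v * (exp |v| - 1)

lemma expPhase_of_nonneg {v : ℝ} (hv : 0 ≤ v) : expPhase v = exp v - 1 := by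
  rcases hv.eq_or_lt with rfl | hv
  · simp [expPhase]
  · simp [expPhase, Real.sign_of_pos hv, abs_of_pos hv]

lemma expPhase_of_nonpos {v : ℝ} (hv : v ≤ 0) : expPhase v = 1 - exp (-v) := by
  rcases hv.eq_or_lt with rfl | hv
  · simp [expPhase]
  · simp [expPhase, Real.sign_of_neg hv, abs_of_neg hv]

lemma abs_expPhase (v : ℝ) : |expPhase v| = exp |v| - 1 := by
  rcases le_total 0 v with hv | hv
  · rw [expPhase_of_nonneg hv, abs_of_nonneg hv, abs_of_nonneg (by simpa using one_le_exp hv)]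
  · rw [expPhase_of_nonpos hv, abs_of_nonpos hv,
      abs_of_nonpos (by simpa using one_le_exp (neg_nonneg.2 hv)), neg_sub]

lemma hasDerivWithinAt_expPhase_Ici {u : ℝ} (hu : 0 ≤ u) :
    HasDerivWithinAt expPhase (exp |u|) (Ici 0) u := by
  rw [abs_of_nonneg hu]
  exact ((hasDerivAt_exp u).sub_const 1).hasDerivWithinAt.congr_of_mem
    (fun v hv => expPhase_of_nonneg hv) hu

lemma hasDerivWithinAt_expPhase_Iic {u : ℝ} (hu : u ≤ 0) :
    HasDerivWithinAt expPhase (exp |u|) (Iic 0) u := by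
  have h : HasDerivAt (fun v => 1 - exp (-v)) (exp (-u)) u := by
    simpa using ((hasDerivAt_exp (-u)).comp u (hasDerivAt_neg u)).const_sub 1
  rw [abs_of_nonpos hu]
  exact h.hasDerivWithinAt.congr_of_mem (fun v hv => expPhase_of_nonpos hv) hu

lemma hasDerivAt_expPhase (u : ℝ) : HasDerivAt expPhase (exp |u|) u := by
  rcases lt_trichotomy u 0 with hu | rfl | hu
  · exact (hasDerivWithinAt_expPhase_Iic hu.le).hasDerivAt (Iic_mem_nhds hu)
  · have h := (hasDerivWithinAt_expPhase_Iic le_rfl).union (hasDerivWithinAt_expPhase_Ici le_rfl)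
    rwa [Iic_union_Ici, hasDerivWithinAt_univ] at h
  · exact (hasDerivWithinAt_expPhase_Ici hu.le).hasDerivAt (Ici_mem_nhds hu)

lemma exp_mul_eq_iff_eq_phase_rhs (a d i : ℝ) :
    exp a * d = exp a - 1 + i ↔ d = (1 - i) * (1 - exp (-a)) + i := by
  have h : exp a * ((1 - i) * (1 - exp (-a)) + i) = exp a - 1 + i := by
    rw [exp_neg]
    field_simp
    ring
  rw [← h, mul_right_inj' (exp_ne_zero a)]

/-- Let `σ = Real.sign` be the sign function, `I : ℝ → ℝ` a
function, and `y : ℝ → ℝ` differentiable.  Then `y` satisfies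
`y' t = (1 - I t) * (1 - exp (-|y t|)) + I t` for all `t` iff the function
`x t = σ (y t) * (exp |y t| - 1)` is differentiable and satisfies the
symmetrized leaky integrate-and-fire equation `x' t = |x t| + I t`
for all `t`. -/
theorem exp_phase_dual_to_symmetrized_LIF
    (I : ℝ → ℝ) (y : ℝ → ℝ) (hy : Differentiable ℝ y) :
    (∀ t, deriv y t = (1 - I t) * (1 - Real.exp (-|y t|)) + I t) ↔
      (Differentiable ℝ (fun t => Real.sign (y t) * (Real.exp |y t| - 1)) ∧
        ∀ t, deriv (fun s => Real.sign (y s) * (Real.exp |y s| - 1)) t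
          = |Real.sign (y t) * (Real.exp |y t| - 1)| + I t) := by
  have hx : ∀ t, HasDerivAt (fun s => Real.sign (y s) * (Real.exp |y s| - 1))
      (exp |y t| * deriv y t) t :=
    fun t => (hasDerivAt_expPhase (y t)).comp t (hy t).hasDerivAt
  rw [and_iff_right (show Differentiable ℝ _ from fun t => (hx t).differentiableAt)]
  refine forall_congr' fun t => ?_
  rw [(hx t).deriv, show |Real.sign (y t) * (exp |y t| - 1)| = exp |y t| - 1 from
    abs_expPhase (y t)]
  exact (exp_mul_eq_iff_eq_phase_rhs _ _ _).symm
end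

section
/- Let σ : ℝ → ℝ denote the sign function, let I : ℝ → ℝ be a function, and let y : ℝ → ℝ be differentiable with y(t) ∈ (−1, 1) for all t. Then y satisfies the linear phase equation y'(t) = (1 − I(t))·|y(t)| + I(t) for all t if and only if the function x(t) = −σ(y(t))·log(1 − |y(t)|) is differentiable and satisfies x'(t) = e^{|x(t)|} − 1 + I(t) for all t. -/
/-!
The change of variables `v ↦ -sign v * log (1 - |v|)` is the odd extension of
`r ↦ -log (1 - r)`, so it is differentiable on `(-1, 1)` with derivative `(1 - |v|)⁻¹`,
which is also `exp |x|` at `x = -sign v * log (1 - |v|)`. By the chain rule `x' = exp |x| * y'`,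
and dividing `x' = exp |x| - 1 + I` by `exp |x| = (1 - |y|)⁻¹` gives `y' = (1 - I) |y| + I`.
-/

open Set

theorem hasDerivAt_sign_mul_comp_abs {φ : ℝ → ℝ} {c u : ℝ} (h0 : φ 0 = 0)
    (hφ : HasDerivAt φ c |u|) : HasDerivAt (fun v => Real.sign v * φ |v|) c u := by
  have hleft (hu : u ≤ 0) : HasDerivWithinAt (fun v => Real.sign v * φ |v|) c (Iic 0) u := by
    rw [abs_of_nonpos hu] at hφ
    have h : HasDerivAt (fun v => -φ (-v)) (-(c * -1)) u := (hφ.comp u (hasDerivAt_neg' u)).neg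
    rw [mul_neg_one, neg_neg] at h
    refine h.hasDerivWithinAt.congr_of_mem (fun v hv => ?_) hu
    rcases (mem_Iic.1 hv).lt_or_eq with hv | rfl
    · simp [Real.sign_of_neg hv, abs_of_neg hv]
    · simp [h0]
  have hright (hu : 0 ≤ u) : HasDerivWithinAt (fun v => Real.sign v * φ |v|) c (Ici 0) u := by
    rw [abs_of_nonneg hu] at hφ
    refine hφ.hasDerivWithinAt.congr_of_mem (fun v hv => ?_) hu
    rcases (mem_Ici.1 hv).lt_or_eq with hv | rfl
    · simp [Real.sign_of_pos hv, abs_of_pos hv]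
    · simp [h0]
  rcases lt_trichotomy u 0 with hu | rfl | hu
  · exact (hleft hu.le).hasDerivAt (Iic_mem_nhds hu)
  · simpa [Iic_union_Ici] using (hleft le_rfl).union (hright le_rfl)
  · exact (hright hu.le).hasDerivAt (Ici_mem_nhds hu)

theorem hasDerivAt_neg_sign_mul_log_one_sub_abs {u : ℝ} (hu : |u| < 1) :
    HasDerivAt (fun v => -Real.sign v * Real.log (1 - |v|)) (1 - |u|)⁻¹ u := by
  have hlog : HasDerivAt (fun r => -Real.log (1 - r)) (1 - |u|)⁻¹ |u| := by
    rw [show (1 - |u|)⁻¹ = -(-1 / (1 - |u|)) by ring]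
    exact ((hasDerivAt_id' |u|).const_sub 1).log (by linarith) |>.neg
  simpa [neg_mul, mul_neg] using hasDerivAt_sign_mul_comp_abs (by simp) hlog

theorem exp_abs_neg_sign_mul_log_one_sub_abs {u : ℝ} (hu : |u| < 1) :
    Real.exp |-Real.sign u * Real.log (1 - |u|)| = (1 - |u|)⁻¹ := by
  rcases eq_or_ne u 0 with rfl | hu0
  · simp
  · have hlog : Real.log (1 - |u|) ≤ 0 :=
      Real.log_nonpos (by linarith) (by linarith [abs_nonneg u])
    have hsign : |Real.sign u| = 1 := by
      rcases Real.sign_apply_eq_of_ne_zero u hu0 with h | h <;> simp [h]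
    rw [abs_mul, abs_neg, hsign, one_mul, abs_of_nonpos hlog, Real.exp_neg,
      Real.exp_log (by linarith)]

theorem eq_one_sub_mul_add_iff_inv_mul_eq {a d i : ℝ} (ha : a ≠ 1) :
    d = (1 - i) * a + i ↔ (1 - a)⁻¹ * d = (1 - a)⁻¹ - 1 + i := by
  have h : (1 - a)⁻¹ - 1 + i = (1 - a)⁻¹ * ((1 - i) * a + i) := by
    field_simp [sub_ne_zero.2 ha.symm]
    ring
  rw [h, mul_right_inj' (inv_ne_zero (sub_ne_zero.2 ha.symm))]

/-- Let `σ = Real.sign` be the sign function, `I : ℝ → ℝ` a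
function, and `y : ℝ → ℝ` differentiable with `y t ∈ (-1, 1)` for all `t`.
Then `y` satisfies the linear phase equation `y' t = (1 - I t) * |y t| + I t`
for all `t` iff the function `x t = -σ (y t) * log (1 - |y t|)` is
differentiable and satisfies `x' t = exp |x t| - 1 + I t` for all `t`. -/
theorem linear_phase_dual_to_exp_IF
    (I : ℝ → ℝ) (y : ℝ → ℝ) (hy : Differentiable ℝ y)
    (hyJ : ∀ t, y t ∈ Set.Ioo (-1 : ℝ) 1) :
    (∀ t, deriv y t = (1 - I t) * |y t| + I t) ↔
      (Differentiable ℝ (fun t => -Real.sign (y t) * Real.log (1 - |y t|)) ∧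
        ∀ t, deriv (fun s => -Real.sign (y s) * Real.log (1 - |y s|)) t
          = Real.exp |(-Real.sign (y t) * Real.log (1 - |y t|))| - 1 + I t) := by
  have habs (t : ℝ) : |y t| < 1 := abs_lt.2 (hyJ t)
  have hx (t : ℝ) : HasDerivAt (fun s => -Real.sign (y s) * Real.log (1 - |y s|))
      ((1 - |y t|)⁻¹ * deriv y t) t :=
    (hasDerivAt_neg_sign_mul_log_one_sub_abs (habs t)).comp t (hy t).hasDerivAt
  rw [and_iff_right (a := Differentiable ℝ _) fun t => (hx t).differentiableAt]
  refine forall_congr' fun t => ?_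
  rw [(hx t).deriv, exp_abs_neg_sign_mul_log_one_sub_abs (habs t)]
  exact eq_one_sub_mul_add_iff_inv_mul_eq (habs t).ne
end

section
/- Let I : ℝ → ℝ be a function and let y : ℝ → ℝ be differentiable with y(t) ∈ (−1, 1) for all t. Then y satisfies y'(t) = (1 − I(t))·(2|y(t)| − y(t)²) + I(t) for all t if and only if the function x(t) = y(t)/(1 − |y(t)|) is differentiable and satisfies the symmetrized linear-quadratic integrate-and-fire equation x'(t) = 2|x(t)| + x(t)² + I(t) for all t. -/
/-! Let `φ v = v / (1 - |v|)`. It is differentiable on `(-1, 1)` with `φ' v = (1 - |v|)⁻²`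
(at `0` both one-sided branches `v / (1 ∓ v)` have slope `1`), and it conjugates the two vector
fields: `φ' v * ((1 - I) (2|v| - v²) + I) = 2|φ v| + (φ v)² + I`. Since `(φ ∘ y)' = φ'(y) y'`
and `φ'` never vanishes, the two differential equations are equivalent. -/

open Set

theorem deriv_eq_iff_deriv_comp_eq {φ φ' y : ℝ → ℝ} {F G : ℝ → ℝ → ℝ}
    (hy : Differentiable ℝ y) (hφ : ∀ t, HasDerivAt φ (φ' (y t)) (y t))
    (hφ' : ∀ t, φ' (y t) ≠ 0) (hconj : ∀ t, φ' (y t) * G t (y t) = F t (φ (y t))) :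
    (∀ t, deriv y t = G t (y t)) ↔
      (Differentiable ℝ (φ ∘ y) ∧ ∀ t, deriv (φ ∘ y) t = F t (φ (y t))) := by
  have hcomp (t : ℝ) : HasDerivAt (φ ∘ y) (φ' (y t) * deriv y t) t :=
    (hφ t).comp t (hy t).hasDerivAt
  rw [and_iff_right (show Differentiable ℝ (φ ∘ y) from fun t => (hcomp t).differentiableAt)]
  refine forall_congr' fun t => ?_
  rw [(hcomp t).deriv, ← hconj, mul_right_inj' (hφ' t)]

theorem hasDerivAt_div_one_sub_mul_zero (c : ℝ) :
    HasDerivAt (fun v : ℝ => v / (1 - c * v)) 1 0 := by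
  have h : HasDerivAt (fun v : ℝ => v / (1 - c * v))
      ((1 * (1 - c * 0) - 0 * (0 - c * 1)) / (1 - c * 0) ^ 2) 0 :=
    (hasDerivAt_id' 0).div ((hasDerivAt_const 0 1).sub ((hasDerivAt_id' 0).const_mul c)) (by simp)
  simpa using h

theorem hasDerivAt_div_one_sub_abs {u : ℝ} (hu : |u| < 1) :
    HasDerivAt (fun v : ℝ => v / (1 - |v|)) ((1 - |u|) ^ 2)⁻¹ u := by
  rcases eq_or_ne u 0 with rfl | hu0
  · have hright : HasDerivWithinAt (fun v : ℝ => v / (1 - |v|)) 1 (Ici 0) 0 :=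
      (hasDerivAt_div_one_sub_mul_zero 1).hasDerivWithinAt.congr
        (fun v hv => by simp [abs_of_nonneg (mem_Ici.1 hv)]) (by simp)
    have hleft : HasDerivWithinAt (fun v : ℝ => v / (1 - |v|)) 1 (Iic 0) 0 :=
      (hasDerivAt_div_one_sub_mul_zero (-1)).hasDerivWithinAt.congr
        (fun v hv => by simp [abs_of_nonpos (mem_Iic.1 hv)]) (by simp)
    simpa [Iic_union_Ici] using hleft.union hright
  · have hne : 1 - |u| ≠ 0 := (sub_pos.2 hu).ne'
    have h : HasDerivAt (fun v : ℝ => v / (1 - |v|))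
        ((1 * (1 - |u|) - u * (0 - SignType.sign u)) / (1 - |u|) ^ 2) u :=
      (hasDerivAt_id' u).div ((hasDerivAt_const u 1).sub (hasDerivAt_abs hu0)) hne
    refine h.congr_deriv ?_
    rw [zero_sub, mul_neg, self_mul_sign]
    ring

theorem inv_one_sub_abs_sq_mul_phase_field (I : ℝ) {v : ℝ} (hv : |v| < 1) :
    ((1 - |v|) ^ 2)⁻¹ * ((1 - I) * (2 * |v| - v ^ 2) + I)
      = 2 * |v / (1 - |v|)| + (v / (1 - |v|)) ^ 2 + I := by
  have hpos : 0 < 1 - |v| := sub_pos.2 hv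
  rw [abs_div, abs_of_pos hpos, div_pow, ← sq_abs v]
  field_simp
  ring

/-- Let `I : ℝ → ℝ` be a function and let `y : ℝ → ℝ` be
differentiable with `y t ∈ (-1, 1)` for all `t`.  Then `y` satisfies
`y' t = (1 - I t) * (2 * |y t| - y t ^ 2) + I t` for all `t` iff the function
`x t = y t / (1 - |y t|)` is differentiable and satisfies the symmetrized
linear-quadratic integrate-and-fire equation
`x' t = 2 * |x t| + x t ^ 2 + I t` for all `t`. -/
theorem LQIF_phase_dual_to_symmetrized_LQIF
    (I : ℝ → ℝ) (y : ℝ → ℝ) (hy : Differentiable ℝ y)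
    (hyJ : ∀ t, y t ∈ Set.Ioo (-1 : ℝ) 1) :
    (∀ t, deriv y t = (1 - I t) * (2 * |y t| - y t ^ 2) + I t) ↔
      (Differentiable ℝ (fun t => y t / (1 - |y t|)) ∧
        ∀ t, deriv (fun s => y s / (1 - |y s|)) t
          = 2 * |y t / (1 - |y t|)| + (y t / (1 - |y t|)) ^ 2 + I t) := by
  have habs (t : ℝ) : |y t| < 1 := abs_lt.2 (hyJ t)
  exact deriv_eq_iff_deriv_comp_eq (φ := fun v => v / (1 - |v|))
    (φ' := fun v => ((1 - |v|) ^ 2)⁻¹) (G := fun t v => (1 - I t) * (2 * |v| - v ^ 2) + I t)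
    (F := fun t x => 2 * |x| + x ^ 2 + I t) hy
    (fun t => hasDerivAt_div_one_sub_abs (habs t))
    (fun t => inv_ne_zero (pow_ne_zero 2 (sub_pos.2 (habs t)).ne'))
    (fun t => inv_one_sub_abs_sq_mul_phase_field (I t) (habs t))
end

section
/- Let f : ℝ → ℝ be continuous with f(x) ≥ 0 for all x, let F(x) = ∫₀ˣ du/(1+f(u)), let h be the inverse of F on J = F(ℝ), and define g(y) = f(h(y))/(1+f(h(y))). Fix a constant I > 0 and reals x₋ < x₊, and set y₋ = F(x₋), y₊ = F(x₊). Then the spiking period is coordinate-independent: ∫_{x₋}^{x₊} dx/(f(x)+I) = ∫_{y₋}^{y₊} dy/((1−I)·g(y) + I). -/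
open intervalIntegral

/-! In the coordinate `y = F x` one has `dy = dx / (1 + f x)`, and the dual rate satisfies
`(1 - I) g (F x) + I = (f x + I) / (1 + f x)`; so the substitution `y = F x` turns the right-hand
integrand into the left-hand one. Since `F` is monotone, the substitution needs no regularity of
`g` at all. -/

theorem hasDerivAt_integral_one_div_one_add {f : ℝ → ℝ} (hcont : Continuous f)
    (hne : ∀ x, 1 + f x ≠ 0) (x : ℝ) :
    HasDerivAt (fun x ↦ ∫ u in (0 : ℝ)..x, 1 / (1 + f u)) (1 / (1 + f x)) x :=
  ((continuous_const.div (continuous_const.add hcont) hne).integral_hasStrictDerivAt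
    0 x).hasDerivAt

theorem integral_comp_mul_one_div_one_add {f F : ℝ → ℝ} (hcont : Continuous f)
    (hge : ∀ x, 0 ≤ f x) (hF : ∀ x, F x = ∫ u in (0 : ℝ)..x, 1 / (1 + f u))
    (G : ℝ → ℝ) (a b : ℝ) :
    ∫ x in a..b, G (F x) * (1 / (1 + f x)) = ∫ y in F a..F b, G y := by
  have hpos : ∀ x, 0 < 1 + f x := fun x ↦ by linarith [hge x]
  obtain rfl : F = fun x ↦ ∫ u in (0 : ℝ)..x, 1 / (1 + f u) := funext hF
  have hderiv := hasDerivAt_integral_one_div_one_add hcont fun x ↦ (hpos x).ne'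
  exact integral_comp_mul_deriv_of_deriv_nonneg
    (fun x _ ↦ (hderiv x).continuousAt.continuousWithinAt) (fun x _ ↦ hderiv x)
    fun x _ ↦ (one_div_pos.2 (hpos x)).le

theorem one_div_add_eq_one_div_dual_rate_mul {a : ℝ} (ha : 1 + a ≠ 0) (I : ℝ) :
    1 / (a + I) = 1 / ((1 - I) * (a / (1 + a)) + I) * (1 / (1 + a)) := by
  have hrate : (1 - I) * (a / (1 + a)) + I = (a + I) / (1 + a) := by
    field_simp
    ring
  rw [hrate, one_div_div, div_mul_div_comm, mul_one, mul_comm (a + I), ← div_div, div_self ha]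

theorem spiking_period_coordinate_independent_general
    (f : ℝ → ℝ) (hcont : Continuous f) (hge : ∀ x, 0 ≤ f x)
    (F : ℝ → ℝ) (hF : ∀ x, F x = ∫ u in (0:ℝ)..x, 1 / (1 + f u))
    (h : ℝ → ℝ) (hinv : ∀ x, h (F x) = x)
    (g : ℝ → ℝ) (hg : ∀ y, g y = f (h y) / (1 + f (h y)))
    (I : ℝ) (xm xp : ℝ) :
    ∫ x in xm..xp, 1 / (f x + I)
      = ∫ y in (F xm)..(F xp), 1 / ((1 - I) * g y + I) := by
  rw [← integral_comp_mul_one_div_one_add hcont hge hF]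
  refine integral_congr fun x _ ↦ ?_
  rw [hg, hinv]
  exact one_div_add_eq_one_div_dual_rate_mul (by linarith [hge x]) I

/-- Let `f : ℝ → ℝ` be continuous with `f x ≥ 0`, let
`F x = ∫ u in 0..x, 1 / (1 + f u)`, let `h` be the inverse of `F` on
`J = Set.range F` (modeled as a total function with `h (F x) = x`), and define
`g y = f (h y) / (1 + f (h y))`.  Fix a constant `I > 0` and reals
`x₋ < x₊`, and set `y₋ = F x₋`, `y₊ = F x₊`.  Then the spiking period is
coordinate-independent:
`∫ x in x₋..x₊, 1 / (f x + I) = ∫ y in y₋..y₊, 1 / ((1 - I) * g y + I)`. -/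
theorem spiking_period_coordinate_independent
    (f : ℝ → ℝ) (hcont : Continuous f) (hge : ∀ x, 0 ≤ f x)
    (F : ℝ → ℝ) (hF : ∀ x, F x = ∫ u in (0:ℝ)..x, 1 / (1 + f u))
    (h : ℝ → ℝ) (hinv : ∀ x, h (F x) = x)
    (g : ℝ → ℝ) (hg : ∀ y, g y = f (h y) / (1 + f (h y)))
    (I : ℝ) (hI : 0 < I) (xm xp : ℝ) (hx : xm < xp) :
    ∫ x in xm..xp, 1 / (f x + I)
      = ∫ y in (F xm)..(F xp), 1 / ((1 - I) * g y + I) :=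
  spiking_period_coordinate_independent_general f hcont hge F hF h hinv g hg I xm xp
end

section
/- For every real I with 0 < I < 1, the spiking period of the quadratic phase model (QIF*) with threshold 1 and reset −1 satisfies ∫_{−1}^{1} dy / ((1−I)·y² + I) = 2·arctan(√((1−I)/I)) / √((1−I)·I); equivalently its firing rate is r(I) = (1/2)·√((1−I)I) / arctan(√((1−I)/I)). Consequently, the firing rate is approximated by the QIF rate near onset: lim_{I→0⁺} r(I)·π/√I = 1. -/
/-!
The substitution `t = √(a / b) * y` turns `∫ dy / (a y² + b)` into a multiple of
`∫ dt / (1 + t²) = arctan`. Near onset `√((1 - I) / I) → ∞`, so the arctangent tends to `π / 2`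
and `r(I) * π / √I = √(1 - I) * π / (2 * arctan √((1 - I) / I)) → 1`.
-/

open Real Filter

theorem integral_one_div_mul_sq_add {a b : ℝ} (ha : 0 < a) (hb : 0 < b) (u v : ℝ) :
    ∫ y in u..v, 1 / (a * y ^ 2 + b)
      = (arctan (√(a / b) * v) - arctan (√(a / b) * u)) / √(a * b) := by
  set c := √(a / b)
  have hc : 0 < c := sqrt_pos.2 (div_pos ha hb)
  have hc_sq : c ^ 2 = a / b := sq_sqrt (div_pos ha hb).le
  have hab : √(a * b) = b * c := by
    rw [show a * b = b ^ 2 * (a / b) by field_simp, sqrt_mul (sq_nonneg b), sqrt_sq hb.le]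
  have h_integrand (y : ℝ) : 1 / (a * y ^ 2 + b) = b⁻¹ * (1 / (1 + (c * y) ^ 2)) := by
    rw [mul_pow, hc_sq]
    field_simp
    ring
  simp_rw [h_integrand, intervalIntegral.integral_const_mul,
    intervalIntegral.integral_comp_mul_left (fun y => 1 / (1 + y ^ 2)) hc.ne',
    integral_one_div_one_add_sq, hab, smul_eq_mul]
  field_simp

theorem tendsto_arctan_sqrt_one_sub_div_nhdsGT_zero :
    Tendsto (fun x : ℝ => arctan √((1 - x) / x)) (nhdsWithin 0 (Set.Ioi 0)) (nhds (π / 2)) := by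
  have h_num : Tendsto (fun x : ℝ => 1 - x) (nhdsWithin 0 (Set.Ioi 0)) (nhds 1) := by
    simpa using ((continuous_sub_left (1 : ℝ)).tendsto 0).mono_left nhdsWithin_le_nhds
  have h_ratio : Tendsto (fun x : ℝ => (1 - x) / x) (nhdsWithin 0 (Set.Ioi 0)) atTop := by
    simpa only [div_eq_mul_inv] using h_num.pos_mul_atTop one_pos tendsto_inv_nhdsGT_zero
  exact (tendsto_arctan_atTop.mono_right nhdsWithin_le_nhds).comp
    (tendsto_sqrt_atTop.comp h_ratio)

/-- For every real `I` with `0 < I < 1`, the spiking period of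
the quadratic phase model (QIF*) with threshold `1` and reset `-1` satisfies
`∫ y in -1..1, 1 / ((1 - I) * y ^ 2 + I) = 2 * arctan (√((1-I)/I)) / √((1-I)*I)`;
equivalently its firing rate is
`r I = (1/2) * √((1-I)*I) / arctan (√((1-I)/I))`.  Consequently, the firing
rate is approximated by the QIF rate `√I / π` near onset:
`lim_{I→0⁺} r I * π / √I = 1`. -/
theorem QIF_star_period_below_one_and_onset :
    (∀ I : ℝ, 0 < I → I < 1 →
      ∫ y in (-1 : ℝ)..1, 1 / ((1 - I) * y ^ 2 + I)
        = 2 * Real.arctan (Real.sqrt ((1 - I) / I)) / Real.sqrt ((1 - I) * I)) ∧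
    Tendsto
      (fun I : ℝ =>
        (1 / ∫ y in (-1 : ℝ)..1, 1 / ((1 - I) * y ^ 2 + I)) * π / Real.sqrt I)
      (nhdsWithin 0 (Set.Ioi 0)) (nhds 1) := by
  have h_period (I : ℝ) (h0 : 0 < I) (h1 : I < 1) :
      ∫ y in (-1 : ℝ)..1, 1 / ((1 - I) * y ^ 2 + I)
        = 2 * arctan √((1 - I) / I) / √((1 - I) * I) := by
    rw [integral_one_div_mul_sq_add (sub_pos.2 h1) h0, mul_one, mul_neg_one, arctan_neg]
    ring
  refine ⟨h_period, ?_⟩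
  have h_sqrt : Tendsto (fun I : ℝ => √(1 - I)) (nhdsWithin 0 (Set.Ioi 0)) (nhds 1) := by
    simpa using ((continuous_sub_left (1 : ℝ)).sqrt.tendsto 0).mono_left nhdsWithin_le_nhds
  have h_lim := (h_sqrt.mul_const π).div
    (tendsto_arctan_sqrt_one_sub_div_nhdsGT_zero.const_mul 2) (by positivity)
  rw [show 1 * π / (2 * (π / 2)) = 1 by field_simp] at h_lim
  refine h_lim.congr' ?_
  filter_upwards [Ioo_mem_nhdsGT (zero_lt_one' ℝ)] with I ⟨h0, h1⟩
  have h_arctan : 0 < arctan √((1 - I) / I) :=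
    arctan_pos.2 (sqrt_pos.2 (div_pos (sub_pos.2 h1) h0))
  have h_sqrt_I : 0 < √I := sqrt_pos.2 h0
  rw [Pi.div_apply, h_period I h0 h1, sqrt_mul (sub_pos.2 h1).le, one_div_div]
  field_simp
end

section
/- For every real I > 0 with I ≠ 1, the spiking period of the linear phase model (LIF*) with threshold 1 and reset −1 satisfies ∫_{−1}^{1} dy / ((1−I)·|y| + I) = 2·(log I)/(I − 1); equivalently its firing rate is r(I) = (I − 1)/(2·log I). -/
open Real intervalIntegral

lemma aux_affine_integral (a b c d : ℝ) (ha : a ≠ 0)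
    (h : ∀ y ∈ Set.uIcc c d, 0 < a * y + b) :
    ∫ y in c..d, 1 / (a * y + b) = (Real.log (a * d + b) - Real.log (a * c + b)) / a := by
  have hderiv : ∀ y ∈ Set.uIcc c d,
      HasDerivAt (fun y => Real.log (a * y + b) / a) (1 / (a * y + b)) y := by
    intro y hy
    have h1 : HasDerivAt (fun y : ℝ => a * y + b) a y := by
      simpa using ((hasDerivAt_id y).const_mul a).add_const b
    have h2 := (Real.hasDerivAt_log (ne_of_gt (h y hy))).comp y h1
    have h3 := h2.div_const a
    have e : (a * y + b)⁻¹ * a / a = 1 / (a * y + b) := by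
      rw [mul_div_assoc, div_self ha, mul_one, one_div]
    rw [e] at h3
    exact h3
  have hcont : ContinuousOn (fun y => 1 / (a * y + b)) (Set.uIcc c d) := by
    apply ContinuousOn.div continuousOn_const
    · exact (continuous_const.mul continuous_id).add continuous_const |>.continuousOn
    · intro y hy; exact ne_of_gt (h y hy)
  rw [intervalIntegral.integral_eq_sub_of_hasDerivAt hderiv (hcont.intervalIntegrable)]
  ring

/-- For every real `I > 0` with `I ≠ 1`, the spiking period of
the linear phase model (LIF*) with threshold `1` and reset `-1` satisfies
`∫ y in -1..1, 1 / ((1 - I) * |y| + I) = 2 * log I / (I - 1)`; equivalently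
its firing rate is `r I = (I - 1) / (2 * log I)`. -/
theorem LIF_star_period (I : ℝ) (hI : 0 < I) (hI1 : I ≠ 1) :
    ∫ y in (-1 : ℝ)..1, 1 / ((1 - I) * |y| + I) = 2 * Real.log I / (I - 1) := by
  have h1I : (1 : ℝ) - I ≠ 0 := by intro h; apply hI1; linarith
  have hI1' : I - 1 ≠ 0 := by intro h; apply hI1; linarith
  have hposR : ∀ y ∈ Set.uIcc (0:ℝ) 1, 0 < (1 - I) * y + I := by
    rw [Set.uIcc_of_le (by norm_num)]
    intro y hy
    rcases le_or_gt I 1 with h | h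
    · nlinarith [hy.1, hy.2]
    · nlinarith [hy.1, hy.2]
  have hposL : ∀ y ∈ Set.uIcc (-1:ℝ) 0, 0 < (I - 1) * y + I := by
    rw [Set.uIcc_of_le (by norm_num)]
    intro y hy
    rcases le_or_gt I 1 with h | h
    · nlinarith [hy.1, hy.2]
    · nlinarith [hy.1, hy.2]
  have hpos : ∀ y ∈ Set.uIcc (-1:ℝ) 1, 0 < (1 - I) * |y| + I := by
    rw [Set.uIcc_of_le (by norm_num)]
    intro y hy
    rcases abs_cases y with ⟨h1, h2⟩ | ⟨h1, h2⟩
    · rw [h1]; exact hposR y (by rw [Set.uIcc_of_le (by norm_num)]; exact ⟨h2, hy.2⟩)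
    · rw [h1]
      have := hposL y (by rw [Set.uIcc_of_le (by norm_num)]; exact ⟨hy.1, le_of_lt h2⟩)
      have e : (1 - I) * (-y) + I = (I - 1) * y + I := by ring
      linarith [e ▸ this]
  have hcont : ContinuousOn (fun y => 1 / ((1 - I) * |y| + I)) (Set.uIcc (-1:ℝ) 1) := by
    apply ContinuousOn.div continuousOn_const
    · exact ((continuous_const.mul continuous_abs).add continuous_const).continuousOn
    · intro y hy; exact ne_of_gt (hpos y hy)
  have hint : IntervalIntegrable (fun y => 1 / ((1 - I) * |y| + I)) MeasureTheory.volume (-1) 1 :=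
    hcont.intervalIntegrable
  have hsub1 : Set.uIcc (-1:ℝ) 0 ⊆ Set.uIcc (-1:ℝ) 1 := by
    rw [Set.uIcc_of_le (by norm_num), Set.uIcc_of_le (by norm_num)]
    exact Set.Icc_subset_Icc_right (by norm_num)
  have hsub2 : Set.uIcc (0:ℝ) 1 ⊆ Set.uIcc (-1:ℝ) 1 := by
    rw [Set.uIcc_of_le (by norm_num), Set.uIcc_of_le (by norm_num)]
    exact Set.Icc_subset_Icc_left (by norm_num)
  rw [← intervalIntegral.integral_add_adjacent_intervals
      (hint.mono_set hsub1) (hint.mono_set hsub2)]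
  have hL : ∫ y in (-1:ℝ)..0, 1 / ((1 - I) * |y| + I)
      = ∫ y in (-1:ℝ)..0, 1 / ((I - 1) * y + I) := by
    apply intervalIntegral.integral_congr
    intro y hy
    rw [Set.uIcc_of_le (by norm_num)] at hy
    have h2 : |y| = -y := abs_of_nonpos hy.2
    show 1 / ((1 - I) * |y| + I) = 1 / ((I - 1) * y + I)
    rw [h2]; ring_nf
  have hR : ∫ y in (0:ℝ)..1, 1 / ((1 - I) * |y| + I)
      = ∫ y in (0:ℝ)..1, 1 / ((1 - I) * y + I) := by
    apply intervalIntegral.integral_congr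
    intro y hy
    rw [Set.uIcc_of_le (by norm_num)] at hy
    show 1 / ((1 - I) * |y| + I) = 1 / ((1 - I) * y + I)
    rw [abs_of_nonneg hy.1]
  rw [hL, hR, aux_affine_integral _ _ _ _ hI1' hposL, aux_affine_integral _ _ _ _ h1I hposR]
  have e1 : (I - 1) * 0 + I = I := by ring
  have e2 : (I - 1) * (-1) + I = 1 := by ring
  have e3 : (1 - I) * 1 + I = 1 := by ring
  have e4 : (1 - I) * 0 + I = I := by ring
  rw [e1, e2, e3, e4, Real.log_one]
  field_simp
  ring
end

section
/- For every real I > 0 with I ≠ 1, the spiking period of the square-root phase model (Sqrt-IF*) with threshold 1 and reset −1 satisfies ∫_{−1}^{1} dy / ((1−I)·√|y| + I) = 4·(1 + I·(log I − 1))/(1 − I)²; equivalently its firing rate is r(I) = (1/4)·(I − 1)² / (1 + I·(log I − 1)). -/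
/-!
The integrand depends on `y` only through `|y|`, so the period is twice the integral over
`[0, 1]`. There `y ↦ (2 / a) √y - (2b / a²) log (a √y + b)` is an antiderivative of
`1 / (a √y + b)`; with `a = 1 - I`, `b = I` we have `a + b = 1`, so the logarithm vanishes at
the upper limit and only `log I` survives from the lower one.
-/

open Real intervalIntegral MeasureTheory Set

theorem intervalIntegral.integral_comp_abs {f : ℝ → ℝ} {c : ℝ} (hc : 0 ≤ c)
    (hf : IntervalIntegrable (fun y => f |y|) volume (-c) c) :
    ∫ y in -c..c, f |y| = 2 * ∫ y in 0..c, f y := by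
  have h_right : ∫ y in 0..c, f |y| = ∫ y in 0..c, f y := by
    refine integral_congr fun y hy => ?_
    rw [uIcc_of_le hc] at hy
    simp only [abs_of_nonneg hy.1]
  have h_left : ∫ y in -c..0, f |y| = ∫ y in 0..c, f |y| := by
    simpa using (integral_comp_neg (a := 0) (b := c) fun y => f |y|).symm
  have h_mem : (0 : ℝ) ∈ uIcc (-c) c := by
    rw [uIcc_of_le (by linarith)]
    constructor <;> linarith
  rw [← integral_add_adjacent_intervals (hf.mono_set (uIcc_subset_uIcc_left h_mem))
    (hf.mono_set (uIcc_subset_uIcc_right h_mem)), h_left, h_right, two_mul]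

section SqrtAffine

variable {a b c : ℝ}

lemma mul_sqrt_add_pos (hb : 0 < b) (hab : 0 < a * √c + b) {y : ℝ} (hy : y ∈ Icc 0 c) :
    0 < a * √y + b := by
  have h0 := sqrt_nonneg y
  have h1 : √y ≤ √c := sqrt_le_sqrt hy.2
  have h2 := sqrt_nonneg c
  rcases le_total 0 a with ha | ha
  · nlinarith
  · nlinarith

lemma hasDerivAt_sqrt_sub_log_mul_sqrt_add (ha : a ≠ 0) {y : ℝ} (hy : 0 < y)
    (hd : 0 < a * √y + b) :
    HasDerivAt (fun y => 2 / a * √y - 2 * b / a ^ 2 * log (a * √y + b))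
      (1 / (a * √y + b)) y := by
  have h_sqrt := hasDerivAt_sqrt hy.ne'
  have h_log := ((h_sqrt.const_mul a).add_const b).log hd.ne'
  refine ((h_sqrt.const_mul (2 / a)).sub (h_log.const_mul (2 * b / a ^ 2))).congr_deriv ?_
  have := sqrt_pos.2 hy
  field_simp
  ring

theorem integral_one_div_mul_sqrt_add (ha : a ≠ 0) (hb : 0 < b) (hc : 0 ≤ c)
    (hab : 0 < a * √c + b) :
    ∫ y in 0..c, 1 / (a * √y + b)
      = 2 / a * √c - 2 * b / a ^ 2 * (log (a * √c + b) - log b) := by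
  have hpos : ∀ y ∈ Icc 0 c, a * √y + b ≠ 0 := fun y hy => (mul_sqrt_add_pos hb hab hy).ne'
  rw [integral_eq_sub_of_hasDeriv_right_of_le hc
    (f := fun y => 2 / a * √y - 2 * b / a ^ 2 * log (a * √y + b))]
  · simp only [sqrt_zero, mul_zero, zero_add]
    ring
  · fun_prop (disch := assumption)
  · exact fun y hy => (hasDerivAt_sqrt_sub_log_mul_sqrt_add ha hy.1
      (mul_sqrt_add_pos hb hab (Ioo_subset_Icc_self hy))).hasDerivWithinAt
  · refine ContinuousOn.intervalIntegrable ?_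
    rw [uIcc_of_le hc]
    fun_prop (disch := assumption)

end SqrtAffine

/-- For every real `I > 0` with `I ≠ 1`, the spiking period of
the square-root phase model (Sqrt-IF*) with threshold `1` and reset `-1`
satisfies
`∫ y in -1..1, 1 / ((1 - I) * √|y| + I) = 4 * (1 + I * (log I - 1)) / (1 - I)^2`;
equivalently its firing rate is
`r I = (1/4) * (I - 1)^2 / (1 + I * (log I - 1))`. -/
theorem sqrt_IF_star_period (I : ℝ) (hI : 0 < I) (hI1 : I ≠ 1) :
    ∫ y in (-1 : ℝ)..1, 1 / ((1 - I) * Real.sqrt |y| + I)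
      = 4 * (1 + I * (Real.log I - 1)) / (1 - I) ^ 2 := by
  have ha : 1 - I ≠ 0 := sub_ne_zero.2 hI1.symm
  have hab : 0 < (1 - I) * √1 + I := by simp
  rw [integral_comp_abs zero_le_one (f := fun y => 1 / ((1 - I) * √y + I)),
    integral_one_div_mul_sqrt_add ha hI zero_le_one hab]
  · simp only [sqrt_one, mul_one, sub_add_cancel, log_one]
    field_simp
    ring
  · have hpos : ∀ y ∈ uIcc (-1 : ℝ) 1, (1 - I) * √|y| + I ≠ 0 := fun y hy => by
      rw [uIcc_of_le (by norm_num)] at hy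
      exact (mul_sqrt_add_pos hI hab ⟨abs_nonneg y, abs_le.2 hy⟩).ne'
    exact ContinuousOn.intervalIntegrable (by fun_prop (disch := assumption))
end

section
/- For every real I > 1, the spiking period of the linear-quadratic phase model (LQIF) with threshold 1 and reset −1 satisfies ∫_{−1}^{1} dy / ((1−I)·(2|y| − y²) + I) = 2·arctan(√(I−1)) / √(I−1); equivalently its firing rate is r(I) = (1/2)·√(I−1) / arctan(√(I−1)). -/
/-! The denominator is `1 + (I - 1) (|y| - 1)²`, so the integrand is even in `y` and, on `[0, 1]`,
the derivative of `arctan (√(I - 1) (y - 1)) / √(I - 1)`. -/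

open Real intervalIntegral

theorem intervalIntegral.integral_comp_abs_neg_self {E : Type*} [NormedAddCommGroup E]
    [NormedSpace ℝ E] {f : ℝ → E} (hf : Continuous f) {a : ℝ} (ha : 0 ≤ a) :
    ∫ x in -a..a, f |x| = (2 : ℝ) • ∫ x in 0..a, f x := by
  have hfa : Continuous fun x => f |x| := hf.comp continuous_abs
  have h_neg : ∫ x in -a..0, f |x| = ∫ x in 0..a, f x := by
    rw [← neg_zero, ← integral_comp_neg, neg_zero]
    refine integral_congr fun x hx => ?_
    rw [Set.uIcc_of_le ha] at hx
    simp only [abs_neg, abs_of_nonneg hx.1]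
  have h_pos : ∫ x in 0..a, f |x| = ∫ x in 0..a, f x := by
    refine integral_congr fun x hx => ?_
    rw [Set.uIcc_of_le ha] at hx
    simp only [abs_of_nonneg hx.1]
  rw [← integral_add_adjacent_intervals (hfa.intervalIntegrable _ _)
    (hfa.intervalIntegrable _ _), h_neg, h_pos, two_smul]

theorem integral_one_div_one_add_sq_mul_sub {a : ℝ} (ha : a ≠ 0) (c u v : ℝ) :
    ∫ x in u..v, 1 / (1 + (a * (x - c)) ^ 2)
      = (arctan (a * (v - c)) - arctan (a * (u - c))) / a := by
  simp only [mul_sub, sub_eq_add_neg (a * _)]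
  rw [integral_comp_mul_add (fun x => 1 / (1 + x ^ 2)) ha, integral_one_div_one_add_sq,
    smul_eq_mul, inv_mul_eq_div]

theorem lqif_denom_eq_one_add_sq {I : ℝ} (hI : 1 ≤ I) (y : ℝ) :
    (1 - I) * (2 * |y| - y ^ 2) + I = 1 + (√(I - 1) * (|y| - 1)) ^ 2 := by
  have hsq : √(I - 1) ^ 2 = I - 1 := sq_sqrt (by linarith)
  linear_combination (1 - I) * sq_abs y - (|y| - 1) ^ 2 * hsq

/-- For every real `I > 1`, the spiking period of the
linear-quadratic phase model (LQIF) with threshold `1` and reset `-1`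
satisfies
`∫ y in -1..1, 1 / ((1 - I) * (2|y| - y^2) + I) = 2 * arctan (√(I-1)) / √(I-1)`;
equivalently its firing rate is `r I = (1/2) * √(I-1) / arctan (√(I-1))`. -/
theorem LQIF_phase_period (I : ℝ) (hI : 1 < I) :
    ∫ y in (-1 : ℝ)..1, 1 / ((1 - I) * (2 * |y| - y ^ 2) + I)
      = 2 * Real.arctan (Real.sqrt (I - 1)) / Real.sqrt (I - 1) := by
  have ha : √(I - 1) ≠ 0 := (sqrt_pos.mpr (sub_pos.mpr hI)).ne'
  have hcont : Continuous fun t : ℝ => 1 / (1 + (√(I - 1) * (t - 1)) ^ 2) :=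
    continuous_const.div (by fun_prop) fun t => by positivity
  simp only [lqif_denom_eq_one_add_sq hI.le]
  rw [integral_comp_abs_neg_self hcont zero_le_one, integral_one_div_one_add_sq_mul_sub ha]
  simp only [sub_self, zero_sub, mul_zero, mul_neg_one, arctan_zero, arctan_neg, smul_eq_mul]
  ring
end

section
/- Fix a real p with 0 < p < 1, and for I ∈ (0,1) define the spiking period T_p(I) = ∫_{−1}^{1} dy / ((1−I)·|y|^p + I) of the monomial phase model with threshold 1 and reset −1. Then the onset firing rate is nonzero: lim_{I→0⁺} 1/T_p(I) = (1−p)/2. In particular the F-I curve r(I) = 1/T_p(I) is discontinuous at I = 0 (since r(I) = 0 for I ≤ 0). -/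
/-!
As `I → 0⁺` the integrand `1 / ((1 - I) |y| ^ p + I)` increases to `|y| ^ (-p)`, which is
integrable on `[-1, 1]` exactly because `p < 1`. Dominated convergence therefore gives
`T_p(I) → ∫_{-1}^{1} |y| ^ (-p) dy = 2 / (1 - p)`, a finite limit, so the rate tends to
`(1 - p) / 2 ≠ 0` while `r 0 = 0`.
-/

open Filter MeasureTheory Set Topology

noncomputable def monomialPeriod (p I : ℝ) : ℝ :=
  ∫ y in (-1 : ℝ)..1, 1 / ((1 - I) * |y| ^ p + I)

section AbsRpow

variable {s : ℝ}

theorem intervalIntegrable_abs_rpow (hs : -1 < s) (a b : ℝ) :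
    IntervalIntegrable (fun y : ℝ => |y| ^ s) volume a b := by
  have from_zero_of_nonneg : ∀ c : ℝ, 0 ≤ c →
      IntervalIntegrable (fun y : ℝ => |y| ^ s) volume 0 c := fun c hc =>
    (intervalIntegral.intervalIntegrable_rpow' hs).congr fun y hy => by
      rw [uIoc_of_le hc] at hy
      simp only [abs_of_pos hy.1]
  have from_zero : ∀ c : ℝ, IntervalIntegrable (fun y : ℝ => |y| ^ s) volume 0 c := by
    intro c
    rcases le_total 0 c with hc | hc
    · exact from_zero_of_nonneg c hc
    · simpa using
        (IntervalIntegrable.iff_comp_neg).mp (from_zero_of_nonneg (-c) (neg_nonneg.mpr hc))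
  exact (from_zero a).symm.trans (from_zero b)

theorem integral_abs_rpow_neg_one_one (hs : -1 < s) :
    ∫ y in (-1 : ℝ)..1, |y| ^ s = 2 / (s + 1) := by
  have right_half : ∫ y in (0 : ℝ)..1, |y| ^ s = 1 / (s + 1) := by
    rw [intervalIntegral.integral_congr (g := fun y : ℝ => y ^ s) fun y hy => by
        rw [uIcc_of_le zero_le_one] at hy
        simp only [abs_of_nonneg hy.1],
      integral_rpow (Or.inl hs), Real.one_rpow, Real.zero_rpow (by linarith), sub_zero]
  have left_half : ∫ y in (-1 : ℝ)..0, |y| ^ s = ∫ y in (0 : ℝ)..1, |y| ^ s := by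
    simpa using (intervalIntegral.integral_comp_neg (fun y : ℝ => |y| ^ s) (a := 0) (b := 1)).symm
  rw [← intervalIntegral.integral_add_adjacent_intervals (intervalIntegrable_abs_rpow hs _ _)
    (intervalIntegrable_abs_rpow hs _ _), left_half, right_half]
  ring

end AbsRpow

theorem tendsto_monomialPeriod_nhdsGT_zero {p : ℝ} (hp0 : 0 < p) (hp1 : p < 1) :
    Tendsto (monomialPeriod p) (𝓝[>] 0) (𝓝 (2 / (1 - p))) := by
  have limit_eq : ∫ y in (-1 : ℝ)..1, |y| ^ (-p) = 2 / (1 - p) := by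
    rw [integral_abs_rpow_neg_one_one (by linarith), neg_add_eq_sub]
  rw [← limit_eq]
  refine intervalIntegral.tendsto_integral_filter_of_dominated_convergence (fun y => |y| ^ (-p))
    (Eventually.of_forall fun I => (by fun_prop : Measurable _).aestronglyMeasurable) ?_
    (intervalIntegrable_abs_rpow (by linarith) _ _) ?_
  · filter_upwards [Ioo_mem_nhdsGT (zero_lt_one' ℝ)] with I hI
    filter_upwards [Measure.ae_ne volume 0] with y hy0 hy
    have hy1 : |y| ≤ 1 := by
      rw [uIoc_of_le (by norm_num)] at hy
      exact abs_le.mpr ⟨hy.1.le, hy.2⟩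
    have hpos : 0 < |y| ^ p := Real.rpow_pos_of_pos (abs_pos.mpr hy0) p
    have hle_one : |y| ^ p ≤ 1 := Real.rpow_le_one (abs_nonneg y) hy1 hp0.le
    -- the denominator is a convex combination of `|y| ^ p ≤ 1` and `1`
    have hden : |y| ^ p ≤ (1 - I) * |y| ^ p + I := by nlinarith [hI.1]
    rw [Real.norm_eq_abs, abs_of_pos (one_div_pos.mpr (by linarith)),
      Real.rpow_neg (abs_nonneg y), ← one_div]
    exact one_div_le_one_div_of_le hpos hden
  · filter_upwards [Measure.ae_ne volume 0] with y hy0 _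
    have hpos : 0 < |y| ^ p := Real.rpow_pos_of_pos (abs_pos.mpr hy0) p
    have hcont : ContinuousAt (fun I : ℝ => 1 / ((1 - I) * |y| ^ p + I)) 0 :=
      continuousAt_const.div (by fun_prop) (by simpa using hpos.ne')
    convert hcont.tendsto.mono_left nhdsWithin_le_nhds using 2
    simp [Real.rpow_neg (abs_nonneg y)]

/-- Fix a real `p` with `0 < p < 1`, and for `I ∈ (0,1)` define
the spiking period `T_p I = ∫ y in -1..1, 1 / ((1 - I) * |y|^p + I)` of the
monomial phase model with threshold `1` and reset `-1`.  Then the onset firing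
rate is nonzero: `lim_{I→0⁺} 1 / T_p I = (1 - p) / 2`.  In particular the F-I
curve `r I = 1 / T_p I` for `I > 0` (with `r I = 0` for `I ≤ 0`) is
discontinuous at `I = 0`. -/
theorem monomial_phase_onset_rate_nonzero
    (p : ℝ) (hp0 : 0 < p) (hp1 : p < 1)
    (T : ℝ → ℝ)
    (hT : ∀ I : ℝ, T I = ∫ y in (-1 : ℝ)..1, 1 / ((1 - I) * |y| ^ p + I))
    (r : ℝ → ℝ) (hr : ∀ I : ℝ, r I = if 0 < I then 1 / T I else 0) :
    Tendsto (fun I : ℝ => 1 / T I) (nhdsWithin 0 (Set.Ioi 0))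
        (nhds ((1 - p) / 2)) ∧
      ¬ ContinuousAt r 0 := by
  obtain rfl : T = monomialPeriod p := funext hT
  have hrate : Tendsto (fun I => 1 / monomialPeriod p I) (𝓝[>] 0) (𝓝 ((1 - p) / 2)) := by
    simpa [inv_div] using
      (tendsto_monomialPeriod_nhdsGT_zero hp0 hp1).inv₀ (div_ne_zero two_ne_zero (by linarith))
  refine ⟨hrate, fun hcont => ?_⟩
  have hr_zero : Tendsto r (𝓝[>] 0) (𝓝 0) := by
    simpa [hr 0] using hcont.tendsto.mono_left nhdsWithin_le_nhds
  have hr_rate : Tendsto r (𝓝[>] 0) (𝓝 ((1 - p) / 2)) :=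
    hrate.congr' (eventually_mem_nhdsWithin.mono fun I hI => (if_pos hI ▸ hr I).symm)
  linarith [tendsto_nhds_unique hr_rate hr_zero]
end

section
/- Fix a real p with p ≥ 1, and for I ∈ (0,1) define the spiking period T_p(I) = ∫_{−1}^{1} dy / ((1−I)·|y|^p + I) of the monomial phase model with threshold 1 and reset −1. Then T_p(I) tends to infinity as I → 0⁺; equivalently the onset firing rate vanishes: lim_{I→0⁺} 1/T_p(I) = 0, so the F-I curve is continuous at I = 0. -/
open Filter Set Topology

/-! On `[0, 1]` and for `p ≥ 1` the denominator satisfies `(1 - I) y^p + I ≤ y + I`, so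
`T_p(I) ≥ ∫₀¹ dy / (y + I) = log ((1 + I) / I)`, which diverges as `I → 0⁺`. -/

lemma monomial_denom_pos {p I : ℝ} (hI : 0 < I) (hI1 : I ≤ 1) (y : ℝ) :
    0 < (1 - I) * |y| ^ p + I := by
  have : 0 ≤ (1 - I) * |y| ^ p := mul_nonneg (by linarith) (by positivity)
  linarith

lemma intervalIntegrable_one_div_monomial_denom {p I : ℝ} (hp : 0 ≤ p) (hI : 0 < I)
    (hI1 : I ≤ 1) (a b : ℝ) :
    IntervalIntegrable (fun y : ℝ => 1 / ((1 - I) * |y| ^ p + I)) MeasureTheory.volume a b := by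
  have hcont : Continuous fun y : ℝ => |y| ^ p := continuous_abs.rpow_const fun _ => Or.inr hp
  exact (continuous_const.div (by fun_prop) fun y => (monomial_denom_pos hI hI1 y).ne')
    |>.intervalIntegrable a b

lemma monomial_denom_le_add {p I y : ℝ} (hp : 1 ≤ p) (hI : 0 ≤ I) (hy : y ∈ Icc 0 1) :
    (1 - I) * |y| ^ p + I ≤ y + I := by
  have hyp : |y| ^ p ≤ y := by
    rw [abs_of_nonneg hy.1]
    simpa using Real.rpow_le_rpow_of_exponent_ge' hy.1 hy.2 zero_le_one hp
  have : (1 - I) * |y| ^ p ≤ |y| ^ p :=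
    mul_le_of_le_one_left (by positivity) (by linarith)
  linarith

lemma integral_one_div_add_const {c : ℝ} (hc : 0 < c) :
    ∫ y in (0 : ℝ)..1, 1 / (y + c) = Real.log ((1 + c) / c) := by
  rw [intervalIntegral.integral_comp_add_right (fun x => 1 / x) c, zero_add,
    integral_one_div_of_pos hc (by linarith)]

lemma log_one_add_div_le_integral_one_div_monomial_denom {p I : ℝ} (hp : 1 ≤ p) (hI : 0 < I)
    (hI1 : I ≤ 1) :
    Real.log ((1 + I) / I) ≤ ∫ y in (-1 : ℝ)..1, 1 / ((1 - I) * |y| ^ p + I) := by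
  have hint := intervalIntegrable_one_div_monomial_denom (p := p) (by linarith) hI hI1
  calc Real.log ((1 + I) / I) = ∫ y in (0 : ℝ)..1, 1 / (y + I) :=
        (integral_one_div_add_const hI).symm
    _ ≤ ∫ y in (0 : ℝ)..1, 1 / ((1 - I) * |y| ^ p + I) := by
      refine intervalIntegral.integral_mono_on zero_le_one ?_ (hint 0 1) fun y hy => ?_
      · exact (continuousOn_const.div (by fun_prop) fun y hy => by
          rw [uIcc_of_le zero_le_one] at hy; linarith [hy.1]).intervalIntegrable
      · exact one_div_le_one_div_of_le (monomial_denom_pos hI hI1 y)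
          (monomial_denom_le_add hp hI.le hy)
    _ ≤ ∫ y in (-1 : ℝ)..1, 1 / ((1 - I) * |y| ^ p + I) :=
      intervalIntegral.integral_mono_interval (by norm_num) zero_le_one le_rfl
        (MeasureTheory.ae_of_all _ fun y => (one_div_pos.2 (monomial_denom_pos hI hI1 y)).le)
        (hint (-1) 1)

lemma tendsto_log_one_add_div_nhdsGT_zero :
    Tendsto (fun I : ℝ => Real.log ((1 + I) / I)) (𝓝[>] 0) atTop := by
  refine Real.tendsto_log_atTop.comp ?_
  have : Tendsto (fun I : ℝ => I⁻¹ + 1) (𝓝[>] 0) atTop :=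
    tendsto_atTop_add_const_right _ 1 tendsto_inv_nhdsGT_zero
  refine this.congr' ?_
  filter_upwards [self_mem_nhdsWithin] with I (hI : 0 < I)
  field_simp

lemma continuousAt_ite_lt_of_tendsto {α β : Type*} [TopologicalSpace α] [LinearOrder α]
    [OrderTopology α] [TopologicalSpace β] {a : α} {c : β} {g : α → β}
    (hg : Tendsto g (𝓝[>] a) (𝓝 c)) :
    ContinuousAt (fun x => if a < x then g x else c) a := by
  rw [ContinuousAt, if_neg (lt_irrefl a), ← nhdsLE_sup_nhdsGT, tendsto_sup]
  constructor
  · refine tendsto_const_nhds.congr' ?_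
    filter_upwards [self_mem_nhdsWithin] with x (hx : x ≤ a)
    rw [if_neg hx.not_gt]
  · refine hg.congr' ?_
    filter_upwards [self_mem_nhdsWithin] with x (hx : a < x)
    rw [if_pos hx]

/-- Fix a real `p ≥ 1`, and for `I ∈ (0,1)` define the spiking
period `T_p I = ∫ y in -1..1, 1 / ((1 - I) * |y|^p + I)` of the monomial phase
model with threshold `1` and reset `-1`.  Then `T_p I → ∞` as `I → 0⁺`;
equivalently the onset firing rate vanishes, `lim_{I→0⁺} 1 / T_p I = 0`, so
the F-I curve `r I = 1 / T_p I` for `I > 0` (with `r I = 0` for `I ≤ 0`) is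
continuous at `I = 0`. -/
theorem monomial_phase_onset_rate_zero
    (p : ℝ) (hp : 1 ≤ p)
    (T : ℝ → ℝ)
    (hT : ∀ I : ℝ, T I = ∫ y in (-1 : ℝ)..1, 1 / ((1 - I) * |y| ^ p + I))
    (r : ℝ → ℝ) (hr : ∀ I : ℝ, r I = if 0 < I then 1 / T I else 0) :
    Tendsto T (nhdsWithin 0 (Set.Ioi 0)) atTop ∧
      Tendsto (fun I : ℝ => 1 / T I) (nhdsWithin 0 (Set.Ioi 0)) (nhds 0) ∧
      ContinuousAt r 0 := by
  have hperiod : Tendsto T (𝓝[>] 0) atTop := by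
    refine tendsto_atTop_mono' _ ?_ tendsto_log_one_add_div_nhdsGT_zero
    filter_upwards [Ioc_mem_nhdsGT one_pos] with I hI
    rw [hT I]
    exact log_one_add_div_le_integral_one_div_monomial_denom hp hI.1 hI.2
  have hrate : Tendsto (fun I => 1 / T I) (𝓝[>] 0) (𝓝 0) := by
    simpa only [one_div, Pi.inv_def] using hperiod.inv_tendsto_atTop
  obtain rfl : r = fun I => if 0 < I then 1 / T I else 0 := funext hr
  exact ⟨hperiod, hrate, continuousAt_ite_lt_of_tendsto hrate⟩
end

section
/- For every real I with 0 < I < 1, the spiking period of the integrate-and-fire model with f(x) = e^{√(2|x|)} − 1, threshold +∞ and reset −∞, satisfies ∫_{−∞}^{∞} dx / (e^{√(2|x|)} − 1 + I) = (2/(1−I)) · Σ_{n=1}^{∞} (1−I)^n / n²; equivalently its firing rate is r(I) = (1−I) / (2·Li₂(1−I)), where Li₂(q) = Σ_{n=1}^{∞} qⁿ/n² is the dilogarithm. -/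
/-!
Folding the even integrand onto `(0, ∞)` and substituting `x = u² / 2` turn the period into
`2 ∫₀^∞ u / (eᵘ - q) du` with `q = 1 - I`. Expanding `1 / (eᵘ - q) = Σ qⁿ e^{-(n+1)u}` and
integrating termwise against `∫₀^∞ u e^{-cu} du = 1 / c²` gives `2 Σ qⁿ / (n+1)² = (2 / q) Li₂ q`.
-/

open MeasureTheory Set Real

theorem integral_Ioi_comp_sqrt_two_mul {E : Type*} [NormedAddCommGroup E] [NormedSpace ℝ E]
    (f : ℝ → E) : ∫ x in Ioi (0 : ℝ), f √(2 * x) = ∫ u in Ioi (0 : ℝ), u • f u := by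
  have himage : (fun u : ℝ => u ^ 2 / 2) '' Ioi 0 = Ioi 0 := by
    ext x
    refine ⟨fun ⟨u, (hu : 0 < u), hux⟩ => hux ▸ (by positivity : 0 < u ^ 2 / 2),
      fun (hx : 0 < x) => ?_⟩
    exact ⟨√(2 * x), sqrt_pos.2 (by positivity), by simp only; rw [sq_sqrt (by positivity)]; ring⟩
  have hderiv : ∀ u ∈ Ioi (0 : ℝ), HasDerivWithinAt (fun u : ℝ => u ^ 2 / 2) u (Ioi 0) u :=
    fun u _ => by simpa using ((hasDerivAt_pow 2 u).div_const 2).hasDerivWithinAt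
  have hinj : InjOn (fun u : ℝ => u ^ 2 / 2) (Ioi 0) := fun a (ha : 0 < a) b (hb : 0 < b) hab =>
    (sq_eq_sq₀ ha.le hb.le).1 (by simpa using hab)
  have hchange := integral_image_eq_integral_abs_deriv_smul measurableSet_Ioi hderiv hinj
    fun x => f √(2 * x)
  rw [himage] at hchange
  refine hchange.trans (setIntegral_congr_fun measurableSet_Ioi fun u (hu : 0 < u) => ?_)
  rw [abs_of_pos hu, mul_div_cancel₀ _ two_ne_zero, sqrt_sq hu.le]

theorem hasSum_pow_mul_exp_neg_succ_mul {q u : ℝ} (h : |q| < exp u) :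
    HasSum (fun n : ℕ => q ^ n * exp (-((n + 1) * u))) (exp u - q)⁻¹ := by
  have hratio : ‖q * exp (-u)‖ < 1 := by
    rwa [norm_mul, norm_eq_abs, norm_of_nonneg (exp_pos _).le, exp_neg,
      mul_inv_lt_iff₀ (exp_pos u), one_mul]
  have hterm : (fun n : ℕ => q ^ n * exp (-((n + 1) * u)))
      = fun n : ℕ => exp (-u) * (q * exp (-u)) ^ n := by
    ext n
    rw [mul_pow, ← exp_nat_mul, mul_left_comm, ← exp_add]
    ring_nf
  have hsum : (exp u - q)⁻¹ = exp (-u) * (1 - q * exp (-u))⁻¹ := by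
    have : exp u - q ≠ 0 := by linarith [le_abs_self q]
    rw [exp_neg]
    field_simp
  rw [hterm, hsum]
  exact (hasSum_geometric_of_norm_lt_one hratio).mul_left (exp (-u))

theorem integrableOn_Ioi_mul_exp_neg_mul {c : ℝ} (hc : 0 < c) :
    IntegrableOn (fun u : ℝ => u * exp (-(c * u))) (Ioi 0) := by
  refine (integrableOn_rpow_mul_exp_neg_mul_rpow (by norm_num : (-1 : ℝ) < 1) one_pos hc).congr_fun
    (fun u _ => ?_) measurableSet_Ioi
  simp

theorem integral_Ioi_mul_exp_neg_mul {c : ℝ} (hc : 0 < c) :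
    ∫ u in Ioi (0 : ℝ), u * exp (-(c * u)) = (c ^ 2)⁻¹ := by
  have h := integral_rpow_mul_exp_neg_mul_Ioi two_pos hc
  norm_num at h
  exact h

theorem integral_Ioi_div_exp_sub {q : ℝ} (hq : |q| ≤ 1) :
    ∫ u in Ioi (0 : ℝ), u / (exp u - q) = ∑' n : ℕ, q ^ n / ((n : ℝ) + 1) ^ 2 := by
  set F : ℕ → ℝ → ℝ := fun n u => q ^ n * (u * exp (-((n + 1) * u)))
  have hF_int (n : ℕ) : IntegrableOn (F n) (Ioi 0) :=
    (integrableOn_Ioi_mul_exp_neg_mul (by positivity)).const_mul _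
  have hF_integral (n : ℕ) : ∫ u in Ioi 0, F n u = q ^ n / ((n : ℝ) + 1) ^ 2 := by
    rw [integral_const_mul, integral_Ioi_mul_exp_neg_mul (c := n + 1) (by positivity),
      div_eq_mul_inv]
  have hF_norm (n : ℕ) : ∫ u in Ioi 0, ‖F n u‖ = |q| ^ n / ((n : ℝ) + 1) ^ 2 := by
    rw [setIntegral_congr_fun measurableSet_Ioi
      (g := fun u => |q| ^ n * (u * exp (-((n + 1) * u))))
      fun u (hu : 0 < u) => by simp [F, abs_of_pos hu]]
    rw [integral_const_mul, integral_Ioi_mul_exp_neg_mul (c := n + 1) (by positivity),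
      div_eq_mul_inv]
  have hF_norm_summable : Summable fun n : ℕ => ∫ u in Ioi 0, ‖F n u‖ := by
    simp_rw [hF_norm]
    refine Summable.of_nonneg_of_le (fun n => by positivity) (fun n => ?_)
      ((summable_nat_add_iff 1).2 (summable_one_div_nat_pow.2 one_lt_two))
    rw [Nat.cast_add_one]
    gcongr
    exact pow_le_one₀ (abs_nonneg q) hq
  have hF_sum : ∀ u ∈ Ioi (0 : ℝ), ∑' n, F n u = u / (exp u - q) := fun u (hu : 0 < u) => by
    rw [div_eq_mul_inv,
      ← ((hasSum_pow_mul_exp_neg_succ_mul (hq.trans_lt (one_lt_exp_iff.2 hu))).mul_left u).tsum_eq]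
    exact tsum_congr fun n => by ring
  rw [← setIntegral_congr_fun measurableSet_Ioi hF_sum,
    ← integral_tsum_of_summable_integral_norm hF_int hF_norm_summable]
  exact tsum_congr hF_integral

/-- For every real `I` with `0 < I < 1`, the spiking period of
the integrate-and-fire model with `f x = exp (√(2|x|)) - 1`, threshold `+∞`
and reset `-∞`, satisfies
`∫ x in ℝ, 1 / (exp (√(2|x|)) - 1 + I) = (2 / (1 - I)) * Σ_{n=1}^∞ (1-I)^n / n²`;
equivalently its firing rate is `r I = (1 - I) / (2 * Li₂ (1 - I))`, where
`Li₂ q = Σ_{n=1}^∞ qⁿ / n²` is the dilogarithm. -/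
theorem exp_sqrt_IF_period (I : ℝ) (hI0 : 0 < I) (hI1 : I < 1) :
    ∫ x : ℝ, 1 / (Real.exp (Real.sqrt (2 * |x|)) - 1 + I)
      = (2 / (1 - I)) *
          ∑' n : ℕ, (1 - I) ^ (n + 1) / ((n : ℝ) + 1) ^ 2 := by
  have hq : |1 - I| ≤ 1 := abs_le.2 ⟨by linarith, by linarith⟩
  have hq0 : 1 - I ≠ 0 := by linarith
  calc ∫ x : ℝ, 1 / (exp √(2 * |x|) - 1 + I)
      = 2 * ∫ x in Ioi (0 : ℝ), 1 / (exp √(2 * x) - 1 + I) :=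
        integral_comp_abs (f := fun x => 1 / (exp √(2 * x) - 1 + I))
    _ = 2 * ∫ u in Ioi (0 : ℝ), u / (exp u - (1 - I)) := by
        rw [integral_Ioi_comp_sqrt_two_mul (fun u => 1 / (exp u - 1 + I))]
        simp_rw [smul_eq_mul, mul_one_div, sub_add]
    _ = _ := by
        simp_rw [integral_Ioi_div_exp_sub hq, pow_succ', mul_div_assoc, tsum_mul_left]
        field_simp
end

section
/- The firing rate r(I) = 1 / ∫_{−∞}^{∞} dx/(e^{√(2|x|)} − 1 + I) of the integrate-and-fire model with f(x) = e^{√(2|x|)} − 1 has the nonzero onset value lim_{I→0⁺} r(I) = 3/π²; in particular this model exhibits a Type-II-like discontinuous F-I curve at I = 0. -/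
open Real Filter MeasureTheory Set

private lemma if_bound_integrable :
    IntegrableOn (fun u : ℝ => u / (Real.exp u - 1)) (Ioi 0) := by
  have meas : Measurable (fun u : ℝ => u / (Real.exp u - 1)) :=
    measurable_id.div (Real.measurable_exp.sub measurable_const)
  rw [← Ioc_union_Ioi_eq_Ioi (zero_le_one (α := ℝ)), integrableOn_union]
  constructor
  · refine Measure.integrableOn_of_bounded (M := 1) measure_Ioc_lt_top.ne
      meas.aestronglyMeasurable ?_
    refine (ae_restrict_iff' measurableSet_Ioc).2 (Eventually.of_forall ?_)
    intro u hu
    have h1 : u + 1 < Real.exp u := Real.add_one_lt_exp hu.1.ne'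
    have h2 : 0 < Real.exp u - 1 := by linarith [hu.1]
    rw [Real.norm_eq_abs, abs_of_nonneg (div_nonneg hu.1.le h2.le)]
    rw [div_le_one h2]; linarith
  · have hint : IntegrableOn (fun u : ℝ => 2 * (Real.exp (-u) * u ^ ((2:ℝ) - 1)))
        (Ioi 1) :=
      ((Real.GammaIntegral_convergent (by norm_num : (0:ℝ) < 2)).mono_set
        (Ioi_subset_Ioi zero_le_one)).const_mul 2
    refine Integrable.mono hint meas.aestronglyMeasurable.restrict ?_
    refine (ae_restrict_iff' measurableSet_Ioi).2 (Eventually.of_forall ?_)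
    intro u hu
    have hu1 : (1:ℝ) < u := hu
    have he2 : (2:ℝ) ≤ Real.exp u := by
      have := Real.add_one_le_exp u; linarith
    have h2 : 0 < Real.exp u - 1 := by linarith
    have hhalf : Real.exp u / 2 ≤ Real.exp u - 1 := by linarith
    rw [Real.norm_eq_abs, Real.norm_eq_abs, abs_of_nonneg (by positivity)]
    have hru : u ^ ((2:ℝ) - 1) = u := by
      rw [show ((2:ℝ) - 1) = 1 by norm_num, Real.rpow_one]
    rw [hru, abs_of_nonneg (by positivity)]
    have : u / (Real.exp u - 1) ≤ u / (Real.exp u / 2) := by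
      gcongr
    calc u / (Real.exp u - 1) ≤ u / (Real.exp u / 2) := this
      _ = 2 * (Real.exp (-u) * u) := by
          rw [Real.exp_neg]; field_simp

private lemma if_hasSum_pt {u : ℝ} (hu : 0 < u) :
    HasSum (fun n : ℕ => u * Real.exp (-((n : ℝ) + 1) * u)) (u / (Real.exp u - 1)) := by
  have hr0 : 0 ≤ Real.exp (-u) := (Real.exp_pos _).le
  have hr1 : Real.exp (-u) < 1 := by
    rw [Real.exp_lt_one_iff]; linarith
  have hgeo := hasSum_geometric_of_lt_one hr0 hr1
  have := hgeo.mul_left (u * Real.exp (-u))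
  have heq : ∀ n : ℕ, u * Real.exp (-u) * Real.exp (-u) ^ n
      = u * Real.exp (-((n : ℝ) + 1) * u) := by
    intro n
    rw [mul_assoc, ← Real.exp_nat_mul, ← Real.exp_add]
    congr 2
    ring
  have hval : u * Real.exp (-u) * (1 - Real.exp (-u))⁻¹ = u / (Real.exp u - 1) := by
    have he : Real.exp u ≠ 0 := (Real.exp_pos u).ne'
    have h1 : 1 - Real.exp (-u) ≠ 0 := by linarith
    have h2 : Real.exp u - 1 ≠ 0 := by
      have : 1 < Real.exp u := by rw [← Real.exp_zero]; exact Real.exp_lt_exp.2 hu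
      linarith
    rw [Real.exp_neg] at h1 ⊢
    field_simp
  rw [← funext heq, ← hval] at *
  exact this

private lemma if_int_term (n : ℕ) :
    ∫ u in Ioi (0:ℝ), u * Real.exp (-((n : ℝ) + 1) * u) = (1 / ((n : ℝ) + 1)) ^ 2 := by
  have h := integral_rpow_mul_exp_neg_mul_Ioi (a := 2) (r := (n : ℝ) + 1)
    (by norm_num) (by positivity)
  rw [Real.Gamma_two, mul_one] at h
  rw [show ((1:ℝ)/((n:ℝ)+1)) ^ (2:ℝ) = (1/((n:ℝ)+1))^2 from by
    rw [show ((2:ℝ)) = ((2:ℕ):ℝ) by norm_num, Real.rpow_natCast]] at h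
  rw [← h]
  refine setIntegral_congr_fun measurableSet_Ioi fun t ht => ?_
  rw [show ((2:ℝ) - 1) = 1 by norm_num, Real.rpow_one, neg_mul]

private lemma if_term_integrable (n : ℕ) :
    IntegrableOn (fun u : ℝ => u * Real.exp (-((n : ℝ) + 1) * u)) (Ioi 0) := by
  have hn : (0:ℝ) < (n : ℝ) + 1 := by positivity
  have h := Real.GammaIntegral_convergent (by norm_num : (0:ℝ) < 2)
  rw [← mul_zero ((n:ℝ)+1), ← integrableOn_Ioi_comp_mul_left_iff _ _ hn] at h
  refine IntegrableOn.congr_fun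
    ((h.const_mul (1 / ((n:ℝ)+1))) : IntegrableOn _ _ _) (fun x hx => ?_)
    measurableSet_Ioi
  have hx0 : (0:ℝ) < x := hx
  rw [show ((2:ℝ) - 1) = 1 by norm_num, Real.rpow_one]
  field_simp
  all_goals ring

private lemma if_val0 : ∫ u in Ioi (0:ℝ), u / (Real.exp u - 1) = π ^ 2 / 6 := by
  have hF_int : ∀ n : ℕ,
      Integrable (fun u : ℝ => u * Real.exp (-((n : ℝ) + 1) * u))
        (volume.restrict (Ioi 0)) := if_term_integrable
  have hnonneg : ∀ n : ℕ, ∀ u ∈ Ioi (0:ℝ),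
      0 ≤ u * Real.exp (-((n : ℝ) + 1) * u) := fun n u hu => mul_nonneg (le_of_lt hu) (Real.exp_pos _).le
  have hnorm : ∀ n : ℕ,
      (∫ u in Ioi (0:ℝ), ‖u * Real.exp (-((n : ℝ) + 1) * u)‖)
        = (1 / ((n : ℝ) + 1)) ^ 2 := by
    intro n
    rw [← if_int_term n]
    exact setIntegral_congr_fun measurableSet_Ioi fun u hu => by
      rw [Real.norm_eq_abs, abs_of_nonneg (hnonneg n u hu)]
  have hsummable : Summable fun n : ℕ =>
      ∫ u in Ioi (0:ℝ), ‖u * Real.exp (-((n : ℝ) + 1) * u)‖ := by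
    simp_rw [hnorm]
    have : Summable fun n : ℕ => (1 / ((n : ℝ) + 1)) ^ 2 := by
      have := (Real.summable_one_div_nat_pow (p := 2)).2 one_lt_two
      have h2 := (summable_nat_add_iff 1).2 this
      refine h2.congr fun n => ?_
      push_cast
      rw [div_pow, one_pow]
    exact this
  have key := hasSum_integral_of_summable_integral_norm
    (μ := volume.restrict (Ioi 0)) hF_int hsummable
  have hts : ∫ u in Ioi (0:ℝ), (∑' n : ℕ, u * Real.exp (-((n : ℝ) + 1) * u))
      = ∫ u in Ioi (0:ℝ), u / (Real.exp u - 1) :=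
    setIntegral_congr_fun measurableSet_Ioi fun u hu => (if_hasSum_pt hu).tsum_eq
  rw [hts] at key
  simp_rw [if_int_term] at key
  have hzeta : HasSum (fun n : ℕ => (1 / ((n : ℝ) + 1)) ^ 2) (π ^ 2 / 6) := by
    have h0 := hasSum_zeta_two
    have h1 := (hasSum_nat_add_iff' (f := fun n : ℕ => (1:ℝ) / (n : ℝ) ^ 2) 1).2 h0
    simp only [Finset.range_one, Finset.sum_singleton, Nat.cast_zero] at h1
    norm_num at h1
    have hfe : (fun n : ℕ => (1:ℝ) / ((n:ℝ) + 1) ^ 2)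
        = fun n : ℕ => (1 / ((n : ℝ) + 1)) ^ 2 := by
      funext n; rw [div_pow, one_pow]
    rwa [show (fun n : ℕ => ((((n:ℝ)) + 1) ^ 2)⁻¹)
        = fun n : ℕ => (1 / ((n : ℝ) + 1)) ^ 2 from by
      funext n; rw [div_pow, one_pow, one_div]] at h1
  exact (HasSum.unique key hzeta)

private lemma if_denom_pos {u I : ℝ} (hu : 0 < u) (hI : 0 ≤ I) :
    0 < Real.exp u - 1 + I := by
  have : 1 < Real.exp u := by rw [← Real.exp_zero]; exact Real.exp_lt_exp.2 hu
  linarith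

private lemma if_intI {I : ℝ} (hI : 0 ≤ I) :
    IntegrableOn (fun u : ℝ => u / (Real.exp u - 1 + I)) (Ioi 0) := by
  refine Integrable.mono if_bound_integrable
    (measurable_id.div ((Real.measurable_exp.sub measurable_const).add
      measurable_const)).aestronglyMeasurable.restrict ?_
  refine (ae_restrict_iff' measurableSet_Ioi).2 (Eventually.of_forall fun u hu => ?_)
  have hu0 : (0:ℝ) < u := hu
  have h1 : 0 < Real.exp u - 1 := by
    have := if_denom_pos hu0 le_rfl; linarith
  rw [Real.norm_eq_abs, Real.norm_eq_abs,
    abs_of_nonneg (div_nonneg hu0.le (if_denom_pos hu0 hI).le),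
    abs_of_nonneg (div_nonneg hu0.le h1.le)]
  gcongr
  linarith

private lemma if_subst {I : ℝ} (hI : 0 ≤ I) :
    ∫ x in Ioi (0:ℝ), 1 / (Real.exp (Real.sqrt (2 * x)) - 1 + I)
      = ∫ u in Ioi (0:ℝ), u / (Real.exp u - 1 + I) := by
  have himg : (fun u : ℝ => u ^ 2 / 2) '' Ioi 0 = Ioi 0 := by
    ext x
    constructor
    · rintro ⟨u, hu, rfl⟩
      have : (0:ℝ) < u := hu
      exact mem_Ioi.2 (by positivity)
    · intro hx
      have hx0 : (0:ℝ) < x := hx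
      refine ⟨Real.sqrt (2 * x), mem_Ioi.2 (Real.sqrt_pos.2 (by linarith)), ?_⟩
      show Real.sqrt (2 * x) ^ 2 / 2 = x
      rw [Real.sq_sqrt (by linarith : (0:ℝ) ≤ 2 * x)]
      ring
  have hderiv : ∀ u ∈ Ioi (0:ℝ),
      HasDerivWithinAt (fun u : ℝ => u ^ 2 / 2) u (Ioi 0) u := by
    intro u hu
    simpa using ((hasDerivAt_pow 2 u).div_const 2).hasDerivWithinAt
  have hinj : InjOn (fun u : ℝ => u ^ 2 / 2) (Ioi 0) := by
    intro a ha b hb hab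
    simp only [mem_Ioi] at ha hb
    nlinarith [sq_nonneg (a - b), sq_nonneg (a + b)]
  have := MeasureTheory.integral_image_eq_integral_abs_deriv_smul
    measurableSet_Ioi hderiv hinj
    (fun x => 1 / (Real.exp (Real.sqrt (2 * x)) - 1 + I))
  rw [himg] at this
  rw [this]
  refine setIntegral_congr_fun measurableSet_Ioi fun u hu => ?_
  have hu0 : (0:ℝ) < u := hu
  have hs : Real.sqrt (2 * (u ^ 2 / 2)) = u := by
    rw [show 2 * (u ^ 2 / 2) = u ^ 2 by ring, Real.sqrt_sq hu0.le]
  simp only [smul_eq_mul, hs, abs_of_nonneg hu0.le]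
  rw [mul_one_div]

private lemma if_Jlim :
    Tendsto (fun I : ℝ => ∫ u in Ioi (0:ℝ), u / (Real.exp u - 1 + I))
      (nhdsWithin 0 (Ioi 0)) (nhds (π ^ 2 / 6)) := by
  rw [← if_val0]
  have : ∀ u : ℝ, u / (Real.exp u - 1) = u / (Real.exp u - 1 + 0) := by
    intro u; rw [add_zero]
  refine tendsto_integral_filter_of_dominated_convergence
    (fun u => u / (Real.exp u - 1)) ?_ ?_ if_bound_integrable ?_
  · exact Eventually.of_forall fun I =>
      (measurable_id.div ((Real.measurable_exp.sub measurable_const).add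
        measurable_const)).aestronglyMeasurable.restrict
  · filter_upwards [self_mem_nhdsWithin] with I hI
    have hI0 : (0:ℝ) < I := hI
    refine (ae_restrict_iff' measurableSet_Ioi).2 (Eventually.of_forall fun u hu => ?_)
    have hu0 : (0:ℝ) < u := hu
    have h1 : 0 < Real.exp u - 1 := by
      have := if_denom_pos hu0 le_rfl; linarith
    rw [Real.norm_eq_abs, abs_of_nonneg (div_nonneg hu0.le (if_denom_pos hu0 hI0.le).le)]
    gcongr
    linarith
  · refine (ae_restrict_iff' measurableSet_Ioi).2 (Eventually.of_forall fun u hu => ?_)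
    have hu0 : (0:ℝ) < u := hu
    have h1 : 0 < Real.exp u - 1 := by
      have := if_denom_pos hu0 le_rfl; linarith
    have hden : Tendsto (fun I : ℝ => Real.exp u - 1 + I) (nhdsWithin 0 (Ioi 0))
        (nhds (Real.exp u - 1)) := by
      have : Tendsto (fun I : ℝ => Real.exp u - 1 + I) (nhds 0)
          (nhds (Real.exp u - 1 + 0)) :=
        (continuous_const.add continuous_id).tendsto 0
      rw [add_zero] at this
      exact this.mono_left nhdsWithin_le_nhds
    exact tendsto_const_nhds.div hden h1.ne'

/-- The firing rate
`r I = 1 / ∫ x in ℝ, 1 / (exp (√(2|x|)) - 1 + I)` of the integrate-and-fire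
model with `f x = exp (√(2|x|)) - 1` has the nonzero onset value
`lim_{I→0⁺} r I = 3 / π²`; in particular this model (with `r I = 0` for
`I ≤ 0`) exhibits a Type-II-like discontinuous F-I curve at `I = 0`. -/
theorem exp_sqrt_IF_onset_rate
    (r : ℝ → ℝ)
    (hr : ∀ I : ℝ, r I =
      if 0 < I then 1 / ∫ x : ℝ, 1 / (Real.exp (Real.sqrt (2 * |x|)) - 1 + I)
      else 0) :
    Tendsto (fun I : ℝ =>
        1 / ∫ x : ℝ, 1 / (Real.exp (Real.sqrt (2 * |x|)) - 1 + I))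
        (nhdsWithin 0 (Set.Ioi 0)) (nhds (3 / π ^ 2)) ∧
      ¬ ContinuousAt r 0 := by
  have hT : ∀ I : ℝ, 0 < I →
      (∫ x : ℝ, 1 / (Real.exp (Real.sqrt (2 * |x|)) - 1 + I))
        = 2 * ∫ u in Ioi (0:ℝ), u / (Real.exp u - 1 + I) := by
    intro I hI
    rw [integral_comp_abs
      (f := fun y : ℝ => 1 / (Real.exp (Real.sqrt (2 * y)) - 1 + I)), if_subst hI.le]
  have hTlim : Tendsto (fun I : ℝ =>
      ∫ x : ℝ, 1 / (Real.exp (Real.sqrt (2 * |x|)) - 1 + I))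
      (nhdsWithin 0 (Set.Ioi 0)) (nhds (π ^ 2 / 3)) := by
    have h2 : Tendsto (fun I : ℝ => 2 * ∫ u in Ioi (0:ℝ), u / (Real.exp u - 1 + I))
        (nhdsWithin 0 (Set.Ioi 0)) (nhds (2 * (π ^ 2 / 6))) := if_Jlim.const_mul 2
    rw [show 2 * (π ^ 2 / 6) = π ^ 2 / 3 by ring] at h2
    refine Tendsto.congr' ?_ h2
    filter_upwards [self_mem_nhdsWithin] with I hI
    exact (hT I hI).symm
  have hpi : (π:ℝ) ^ 2 / 3 ≠ 0 := by positivity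
  have hmain : Tendsto (fun I : ℝ =>
      1 / ∫ x : ℝ, 1 / (Real.exp (Real.sqrt (2 * |x|)) - 1 + I))
      (nhdsWithin 0 (Set.Ioi 0)) (nhds (3 / π ^ 2)) := by
    have h3 := hTlim.inv₀ hpi
    rw [show ((π:ℝ) ^ 2 / 3)⁻¹ = 3 / π ^ 2 from by rw [inv_div]] at h3
    simpa [one_div] using h3
  refine ⟨hmain, fun hc => ?_⟩
  have h0 : r 0 = 0 := by rw [hr 0]; simp
  have h1 : Tendsto r (nhdsWithin 0 (Set.Ioi 0)) (nhds 0) := by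
    have := hc.tendsto.mono_left (nhdsWithin_le_nhds (s := Set.Ioi 0))
    rwa [h0] at this
  have h2 : Tendsto r (nhdsWithin 0 (Set.Ioi 0)) (nhds (3 / π ^ 2)) := by
    refine Tendsto.congr' ?_ hmain
    filter_upwards [self_mem_nhdsWithin] with I hI
    rw [hr I, if_pos (by exact hI)]
  have huniq := tendsto_nhds_unique h1 h2
  have hpos : (0:ℝ) < 3 / π ^ 2 := by positivity
  linarith
end
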